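/- arXiv:0709.0291 — 10 statements merged into one kernel-verified Lean document; each statement's English description precedes it below -/
import Mathlib

section
/- The map sending an equivalence class [π]_Y of permutations under ∼_Y to the acyclic orientation O_Y^π is a well-defined bijection from S_Y/∼_Y to Acyc(Y). -/
/-!
`O_Y^π` only records the relative order of adjacent vertices, and swapping two neighbouring
entries of `π` changes the relative order of that pair only; so `O_Y^π` is constant on
`∼_Y`-classes. It is acyclic because its edges increase the position in `π`. Conversely, if
`O_Y^π = O_Y^π'` and `π ≠ π'`, then `π'⁻¹ π` has a descent at some position `k`: `π'` lists
`π (k + 1)` before `π k`, so these vertices are not adjacent in `Y`, and swapping them is an update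
step that lowers the number of inversions of `π'⁻¹ π`. Surjectivity is topological sorting.
-/

namespace AcycPaper

variable {V : Type*}

/-- `r` is an orientation of the graph `Y`: exactly one direction per edge. -/
def IsOrientation (Y : SimpleGraph V) (r : V → V → Prop) : Prop :=
  (∀ i j, Y.Adj i j ↔ (r i j ∨ r j i)) ∧ ∀ i j, r i j → ¬ r j i

/-- A relation is acyclic if it has no directed cycles. -/
def IsAcyclicRel (r : V → V → Prop) : Prop := ∀ v, ¬ Relation.TransGen r v v

/-- The set of acyclic orientations of `Y`. -/
def Acyc (Y : SimpleGraph V) : Set (V → V → Prop) :=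
  {r | IsOrientation Y r ∧ IsAcyclicRel r}

/-- `v` is a source: no edge points into `v`. -/
def IsSource (r : V → V → Prop) (v : V) : Prop := ∀ j, ¬ r j v

open Classical in
/-- Click (source-to-sink move) at `v`: reverse all edges incident to `v`. -/
def click (r : V → V → Prop) (v : V) : V → V → Prop :=
  fun i j => if v = i ∨ v = j then r j i else r i j

/-- One click step between acyclic orientations. -/
def ClickStep (Y : SimpleGraph V) (r r' : V → V → Prop) : Prop :=
  r ∈ Acyc Y ∧ ∃ v, IsSource r v ∧ r' = click r v

/-- κ-equivalence: the equivalence relation generated by clicks. -/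
def KEquiv (Y : SimpleGraph V) : (V → V → Prop) → (V → V → Prop) → Prop :=
  Relation.EqvGen (ClickStep Y)

/-- The set of κ-equivalence classes of acyclic orientations. -/
def KQuot (Y : SimpleGraph V) := Quot (fun a b : Acyc Y => ClickStep Y a.1 b.1)

/-- κ(Y): number of κ-equivalence classes. -/
noncomputable def kappa (Y : SimpleGraph V) : ℕ := Nat.card (KQuot Y)

/-- α(Y): number of acyclic orientations. -/
noncomputable def alpha (Y : SimpleGraph V) : ℕ := Nat.card (Acyc Y)

/-- The orientation of `Y` induced by a permutation `π` (position `k` holds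
vertex `π k`): each edge is oriented from the vertex occurring earlier in `π`
to the one occurring later. -/
def permRel {n : ℕ} (Y : SimpleGraph (Fin n)) (π : Equiv.Perm (Fin n)) :
    Fin n → Fin n → Prop :=
  fun i j => Y.Adj i j ∧ π.symm i < π.symm j

/-- Adjacency in the update graph U(Y): the two permutations differ by swapping
two consecutive positions holding vertices non-adjacent in `Y`. -/
def UpdateAdj {n : ℕ} (Y : SimpleGraph (Fin n)) (π π' : Equiv.Perm (Fin n)) : Prop :=
  ∃ (k : ℕ) (hk : k + 1 < n),
    ¬ Y.Adj (π ⟨k, Nat.lt_of_succ_lt hk⟩) (π ⟨k + 1, hk⟩) ∧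
    π' = π * Equiv.swap ⟨k, Nat.lt_of_succ_lt hk⟩ ⟨k + 1, hk⟩
open Relation Equiv Finset

section Orientation

variable {V α : Type*} {Y : SimpleGraph V}

theorem mem_acyc_of_injective [LinearOrder α] {f : V → α} (hf : Function.Injective f) :
    (fun i j => Y.Adj i j ∧ f i < f j) ∈ Acyc Y := by
  refine ⟨⟨fun i j => ⟨fun h => ?_, ?_⟩, fun i j hij hji => hij.2.asymm hji.2⟩, fun v hv => ?_⟩
  · rcases lt_trichotomy (f i) (f j) with hlt | heq | hgt
    · exact .inl ⟨h, hlt⟩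
    · exact absurd (hf heq) (Y.ne_of_adj h)
    · exact .inr ⟨h.symm, hgt⟩
  · rintro (⟨h, -⟩ | ⟨h, -⟩)
    exacts [h, h.symm]
  · have hlt := TransGen.lift f (fun _ _ h => h.2) _ _ hv
    rw [transGen_eq_self] at hlt
    exact hlt.false

theorem IsOrientation.eq_adj_and_lt [LinearOrder α] {r : V → V → Prop} (hr : IsOrientation Y r)
    {f : V → α} (hf : ∀ i j, r i j → f i < f j) : r = fun i j => Y.Adj i j ∧ f i < f j := by
  funext i j
  refine propext ⟨fun h => ⟨(hr.1 i j).2 (.inl h), hf i j h⟩, fun ⟨hadj, hlt⟩ => ?_⟩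
  exact ((hr.1 i j).1 hadj).resolve_right fun h => (hf j i h).asymm hlt

/-- Topological sorting: number a linear extension of the strict order `TransGen r`. -/
theorem IsAcyclicRel.exists_equiv_fin [Fintype V] {r : V → V → Prop} (hr : IsAcyclicRel r)
    {m : ℕ} (hm : Fintype.card V = m) : ∃ e : V ≃ Fin m, ∀ i j, r i j → e i < e j := by
  have : IsStrictOrder V (TransGen r) := { irrefl := hr, trans := fun _ _ _ => TransGen.trans }
  let _ : PartialOrder V := partialOrderOfSO (TransGen r)
  let _ : Fintype (LinearExtension V) := inferInstanceAs (Fintype V)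
  let e := Fintype.orderIsoFinOfCardEq (LinearExtension V) hm
  refine ⟨e.symm.toEquiv, fun i j h => e.symm.strictMono ?_⟩
  have hij : i < j := TransGen.single h
  exact (toLinearExtension.monotone hij.le).lt_of_ne hij.ne

end Orientation

section Permutation

variable {n : ℕ}

theorem swap_lt_swap_iff {a b x y : Fin n} (hab : (a : ℕ) + 1 = b)
    (hxy : ¬(x = a ∧ y = b)) (hyx : ¬(x = b ∧ y = a)) : swap a b x < swap a b y ↔ x < y := by
  simp only [swap_apply_def]
  split_ifs <;> simp only [Fin.ext_iff, Fin.lt_def, not_and] at * <;> omega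

/-- Since `a` and `b` are consecutive, the swap only reverses the relative order of `π a` and `π b`,
which `permRel` does not record. -/
theorem permRel_mul_swap (Y : SimpleGraph (Fin n)) (π : Perm (Fin n)) {a b : Fin n}
    (hab : (a : ℕ) + 1 = b) (h : ¬ Y.Adj (π a) (π b)) :
    permRel Y (π * swap a b) = permRel Y π := by
  have hsymm : ∀ x, (π * swap a b).symm x = swap a b (π.symm x) := fun x => by
    simp [Perm.mul_def]
  funext i j
  refine propext (and_congr_right fun hij => ?_)
  rw [hsymm, hsymm]
  refine swap_lt_swap_iff hab ?_ ?_ <;> rintro ⟨hi, hj⟩ <;>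
    rw [symm_apply_eq] at hi hj <;> subst hi hj
  exacts [h hij, h hij.symm]

theorem UpdateAdj.permRel_eq {Y : SimpleGraph (Fin n)} {π π' : Perm (Fin n)} :
    UpdateAdj Y π π' → permRel Y π = permRel Y π'
  | ⟨_, _, h, hπ'⟩ => hπ' ▸ (permRel_mul_swap Y π rfl h).symm

def inversions (σ : Perm (Fin n)) : Finset (Fin n × Fin n) :=
  univ.filter fun p => p.1 < p.2 ∧ σ p.2 < σ p.1

theorem card_inversions_mul_swap_lt {σ : Perm (Fin n)} {a b : Fin n} (hab : (a : ℕ) + 1 = b)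
    (hσ : σ b < σ a) : #(inversions (σ * swap a b)) < #(inversions σ) := by
  have hmem : (a, b) ∈ inversions σ :=
    mem_filter.2 ⟨mem_univ _, Fin.lt_def.2 (show (a : ℕ) < b by omega), hσ⟩
  refine lt_of_le_of_lt ?_ (card_erase_lt_of_mem hmem)
  refine card_le_card_of_injOn (fun p => (swap a b p.1, swap a b p.2)) ?_ ?_
  · rintro ⟨p, q⟩ hpq
    obtain ⟨-, hlt, hinv⟩ := mem_filter.1 hpq
    dsimp only [Perm.mul_apply] at hlt hinv
    have hne_ab : ¬(p = a ∧ q = b) := by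
      rintro ⟨rfl, rfl⟩
      simp only [swap_apply_left, swap_apply_right] at hinv
      exact hinv.asymm hσ
    have hne_ba : ¬(p = b ∧ q = a) := by
      rintro ⟨rfl, rfl⟩
      rw [Fin.lt_def] at hlt
      omega
    refine mem_erase.2 ⟨fun h => hne_ba ?_, ?_⟩
    · simpa only [Prod.mk.injEq, swap_apply_eq_iff, swap_apply_left, swap_apply_right] using h
    · simp [inversions, (swap_lt_swap_iff hab hne_ab hne_ba).2 hlt, hinv]
  · rintro ⟨p₁, q₁⟩ - ⟨p₂, q₂⟩ - h
    simpa only [Prod.mk.injEq, (swap a b).injective.eq_iff] using h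

theorem exists_descent_of_ne_one {σ : Perm (Fin n)} (hσ : σ ≠ 1) :
    ∃ (k : ℕ) (hk : k + 1 < n), σ ⟨k + 1, hk⟩ < σ ⟨k, Nat.lt_of_succ_lt hk⟩ := by
  by_contra! h
  refine hσ (Equiv.ext fun x => congrFun (StrictMono.eq_id ?_) x)
  cases n with
  | zero => exact fun x => x.elim0
  | succ m =>
    refine Fin.strictMono_iff_lt_succ.2 fun i => (h i (by omega)).lt_of_ne ?_
    exact σ.injective.ne (by simp [Fin.ext_iff])

theorem eqvGen_updateAdj_of_permRel_eq {Y : SimpleGraph (Fin n)} {π π' : Perm (Fin n)}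
    (h : permRel Y π = permRel Y π') : EqvGen (UpdateAdj Y) π π' := by
  induction hN : #(inversions (π'⁻¹ * π)) using Nat.strong_induction_on generalizing π with
  | _ N ih =>
  by_cases hπ : π'⁻¹ * π = 1
  · rw [inv_mul_eq_one.1 hπ]
    exact .refl _
  obtain ⟨k, hk, hdesc⟩ := exists_descent_of_ne_one hπ
  set a : Fin n := ⟨k, Nat.lt_of_succ_lt hk⟩
  set b : Fin n := ⟨k + 1, hk⟩
  have hnadj : ¬ Y.Adj (π a) (π b) := fun hadj => by
    have : permRel Y π' (π a) (π b) := h ▸ ⟨hadj, by simp [a, b, Fin.lt_def]⟩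
    exact this.2.asymm hdesc
  have hstep : UpdateAdj Y π (π * swap a b) := ⟨k, hk, hnadj, rfl⟩
  refine .trans _ _ _ (.rel _ _ hstep) (ih _ ?_ ((permRel_mul_swap Y π rfl hnadj).trans h) rfl)
  rw [← hN, ← mul_assoc]
  exact card_inversions_mul_swap_lt rfl hdesc

end Permutation

/-- the map [π]_Y ↦ O_Y^π is a well-defined bijection from
S_Y/∼_Y (permutations modulo the equivalence generated by the update graph)
to Acyc(Y). -/
theorem permRel_wellDefined_bijection {n : ℕ} (Y : SimpleGraph (Fin n)) :
    (∀ π π' : Equiv.Perm (Fin n),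
        Relation.EqvGen (UpdateAdj Y) π π' → permRel Y π = permRel Y π') ∧
    (∀ π : Equiv.Perm (Fin n), permRel Y π ∈ Acyc Y) ∧
    (∀ π π' : Equiv.Perm (Fin n),
        permRel Y π = permRel Y π' → Relation.EqvGen (UpdateAdj Y) π π') ∧
    (∀ r ∈ Acyc Y, ∃ π : Equiv.Perm (Fin n), permRel Y π = r) := by
  refine ⟨fun π π' h => ?_, fun π => mem_acyc_of_injective π.symm.injective,
    fun _ _ => eqvGen_updateAdj_of_permRel_eq, ?_⟩
  · exact congrArg (Quot.lift (permRel Y) fun _ _ => UpdateAdj.permRel_eq) (Quot.eqvGen_sound h)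
  · rintro r ⟨hr, hacyc⟩
    obtain ⟨e, he⟩ := hacyc.exists_equiv_fin (Fintype.card_fin n)
    exact ⟨e.symm, (hr.eq_adj_and_lt he).symm⟩

end AcycPaper
end

section
/- For any acyclic orientation O of a graph Y and any non-bridge edge e = {v,w}, exactly one of the following holds: reversing e in O yields a non-acyclic orientation; or reversing e preserves acyclicity. Moreover, the map β_e sending O to its restriction to Y with e deleted (when the reversal of e is not acyclic, or when e is oriented (v,w) and its reversal is acyclic), and to the induced orientation of the contraction Y/e (when e is oriented (w,v) and its reversal is acyclic), is a bijection from Acyc(Y) onto Acyc(Y−e) ∪ Acyc(Y/e). -/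
/-!
Restricting an acyclic orientation `O` of `Y` to `Y - e` forgets only the direction of
`e = {v, w}`. If an acyclic orientation `t` of `Y - e` has a path `w ⇝ v`, its only acyclic
extension orients `e` as `w → v`, and reversing `e` there creates a cycle; otherwise adding
`v → w` is acyclic. So restriction is a bijection from the orientations that are not
"`w → v` with acyclic reversal" onto `Acyc (Y - e)`.

For the remaining `O` there is no path between `v` and `w` in `O - e`, so merging `w` into `v`
gives an acyclic orientation of `Y / e`: a closed walk downstairs lifts to walks upstairs that
can jump between `v` and `w` at most once. Pulling an orientation of `Y / e` back along the
vertex map and adding the arc `w → v` inverts this.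
-/

namespace AcycPaper

variable {V : Type*}

/-- The simple graph obtained from Y by contracting the edge {v,w}: the vertex w
becomes isolated and its former neighbours are attached to v instead. -/
def contractG (Y : SimpleGraph V) (v w : V) : SimpleGraph V where
  Adj a b := a ≠ w ∧ b ≠ w ∧ a ≠ b ∧
    ((Y.deleteEdges {s(v, w)}).Adj a b ∨ (a = v ∧ Y.Adj w b) ∨ (b = v ∧ Y.Adj a w))
  symm := by
    constructor
    rintro a b ⟨h1, h2, h3, h4⟩
    refine ⟨h2, h1, h3.symm, ?_⟩
    rcases h4 with h | ⟨rfl, h⟩ | ⟨rfl, h⟩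
    · exact Or.inl h.symm
    · exact Or.inr (Or.inr ⟨rfl, h.symm⟩)
    · exact Or.inr (Or.inl ⟨rfl, h.symm⟩)
  loopless := by constructor; rintro a ⟨_, _, h, _⟩; exact h rfl

/-- The orientation induced on the deleted graph Y − e (restriction). -/
def delRel (r : V → V → Prop) (v w : V) : V → V → Prop :=
  fun i j => r i j ∧ ¬((i = v ∧ j = w) ∨ (i = w ∧ j = v))

open Classical in
/-- The orientation obtained from r by reversing the edge {v,w}. -/
def revEdge (r : V → V → Prop) (v w : V) : V → V → Prop :=
  fun i j => if (i = v ∧ j = w) ∨ (i = w ∧ j = v) then r j i else r i j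

/-- The orientation induced on the contracted graph Y/e. -/
def contractRel (r : V → V → Prop) (v w : V) : V → V → Prop :=
  fun a b => a ≠ w ∧ b ≠ w ∧ a ≠ b ∧
    (delRel r v w a b ∨ (a = v ∧ r w b) ∨ (b = v ∧ r a w))


open Relation

section Relations

variable {α β : Type*} {r s t : α → α → Prop}

lemma IsAcyclicRel.irrefl (hr : IsAcyclicRel r) (a : α) : ¬ r a a :=
  fun h => hr a (.single h)

lemma IsAcyclicRel.asymm (hr : IsAcyclicRel r) {a b : α} (hab : r a b) : ¬ r b a :=
  fun hba => hr a (.tail (.single hab) hba)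

lemma IsAcyclicRel.mono (hs : IsAcyclicRel s) (hrs : ∀ a b, r a b → s a b) : IsAcyclicRel r :=
  fun a h => hs a (TransGen.mono hrs a a h)

lemma IsAcyclicRel.of_map {p : β → β → Prop} (hp : IsAcyclicRel p) (f : α → β)
    (hr : ∀ a b, r a b → p (f a) (f b)) : IsAcyclicRel r :=
  fun a h => hp (f a) (TransGen.lift f hr a a h)

lemma IsAcyclicRel.map_of_collapse {f : α → β} {M : Set α} (hs : IsAcyclicRel s)
    (hf : ∀ x y, f x = f y → x = y ∨ x ∈ M ∧ y ∈ M)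
    (hM : ∀ m ∈ M, ∀ m' ∈ M, ¬ TransGen s m m') :
    IsAcyclicRel (Relation.Map s f f) := by
  -- a walk downstairs lifts either to a path upstairs or to two paths joined by one jump in `M`
  have lift : ∀ p q, TransGen (Relation.Map s f f) p q → ∃ a b, f a = p ∧ f b = q ∧
      (TransGen s a b ∨ (∃ m ∈ M, ReflTransGen s a m) ∧ ∃ m ∈ M, TransGen s m b) := by
    intro p q h
    induction h with
    | single h =>
      obtain ⟨a, b, hab, rfl, rfl⟩ := h
      exact ⟨a, b, rfl, rfl, Or.inl (.single hab)⟩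
    | tail _ hqr ih =>
      obtain ⟨a, b, rfl, hb, hpath⟩ := ih
      obtain ⟨b', c, hb'c, hb', rfl⟩ := hqr
      refine ⟨a, c, rfl, rfl, ?_⟩
      rcases hf b b' (hb.trans hb'.symm) with rfl | ⟨hbM, hb'M⟩
      · exact hpath.imp (·.tail hb'c)
          (And.imp_right fun ⟨m, hm, h⟩ => ⟨m, hm, h.tail hb'c⟩)
      · rcases hpath with h | ⟨-, m, hm, h⟩
        · exact Or.inr ⟨⟨b, hbM, h.to_reflTransGen⟩, b', hb'M, .single hb'c⟩
        · exact absurd h (hM m hm b hbM)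
  intro x hx
  obtain ⟨a, b, ha, hb, hpath⟩ := lift x x hx
  rcases hf b a (hb.trans ha.symm) with rfl | ⟨hbM, haM⟩
  · rcases hpath with h | ⟨⟨m, hm, ham⟩, m', hm', hm'b⟩
    · exact hs _ h
    · exact hM m' hm' m hm (hm'b.trans_left ham)
  · rcases hpath with h | ⟨-, m', hm', h⟩
    · exact hM a haM b hbM h
    · exact hM m' hm' b hbM h

def addArc (t : α → α → Prop) (a b : α) : α → α → Prop :=
  fun i j => t i j ∨ (i = a ∧ j = b)

lemma transGen_addArc {a b x y : α} (h : TransGen (addArc t a b) x y) :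
    TransGen t x y ∨ ReflTransGen t x a ∧ ReflTransGen t b y := by
  induction h with
  | single h =>
    rcases h with h | ⟨rfl, rfl⟩
    exacts [Or.inl (.single h), Or.inr ⟨.refl, .refl⟩]
  | tail _ hyz ih =>
    rcases hyz with h | ⟨rfl, rfl⟩
    · exact ih.imp (·.tail h) (And.imp_right (·.tail h))
    · exact Or.inr ⟨ih.elim (·.to_reflTransGen) And.left, .refl⟩

lemma isAcyclicRel_addArc {a b : α} (ht : IsAcyclicRel t) (hba : ¬ ReflTransGen t b a) :
    IsAcyclicRel (addArc t a b) :=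
  fun x hx => (transGen_addArc hx).elim (ht x) fun ⟨hxa, hbx⟩ => hba (hbx.trans hxa)

lemma not_isAcyclicRel_addArc {a b : α} (hba : TransGen t b a) : ¬ IsAcyclicRel (addArc t a b) :=
  fun h => h a (.head (Or.inr ⟨rfl, rfl⟩) (TransGen.mono (fun _ _ => Or.inl) b a hba))

end Relations

section Deletion

variable {Y : SimpleGraph V} {v w a b : V} {r t : V → V → Prop}

lemma mem_acyc_of (hadj : ∀ i j, Y.Adj i j ↔ r i j ∨ r j i) (hr : IsAcyclicRel r) :
    r ∈ Acyc Y :=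
  ⟨⟨hadj, fun _ _ => hr.asymm⟩, hr⟩

lemma delRel_iff {i j : V} : delRel r v w i j ↔ r i j ∧ s(i, j) ≠ s(v, w) := by
  rw [Ne, Sym2.eq_iff]; rfl

lemma deleteEdges_adj_iff {i j : V} :
    (Y.deleteEdges {s(v, w)}).Adj i j ↔ Y.Adj i j ∧ s(i, j) ≠ s(v, w) := by
  simp

lemma delRel_mem (hr : r ∈ Acyc Y) : delRel r v w ∈ Acyc (Y.deleteEdges {s(v, w)}) := by
  refine mem_acyc_of (fun i j => ?_) (hr.2.mono fun _ _ h => h.1)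
  simp only [deleteEdges_adj_iff, delRel_iff, hr.1.1 i j, Sym2.eq_swap (a := j)]
  tauto

lemma edge_ne_of_mem_acyc_deleteEdges (ht : t ∈ Acyc (Y.deleteEdges {s(v, w)})) {i j : V}
    (hij : t i j) : s(i, j) ≠ s(v, w) :=
  (deleteEdges_adj_iff.1 ((ht.1.1 i j).2 (Or.inl hij))).2

lemma delRel_addArc (ht : t ∈ Acyc (Y.deleteEdges {s(v, w)})) (hab : s(a, b) = s(v, w)) :
    delRel (addArc t a b) v w = t := by
  ext i j
  rw [delRel_iff, addArc]
  constructor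
  · rintro ⟨h | ⟨rfl, rfl⟩, hne⟩
    exacts [h, absurd hab hne]
  · exact fun h => ⟨Or.inl h, edge_ne_of_mem_acyc_deleteEdges ht h⟩

lemma addArc_mem (he : Y.Adj v w) (ht : t ∈ Acyc (Y.deleteEdges {s(v, w)}))
    (hab : s(a, b) = s(v, w)) (hba : ¬ TransGen t b a) : addArc t a b ∈ Acyc Y := by
  have hne : b ≠ a := fun h => he.ne (Sym2.eq_iff.1 hab |>.elim
    (fun ⟨ha, hb⟩ => ha ▸ hb ▸ h.symm) (fun ⟨ha, hb⟩ => ha ▸ hb ▸ h))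
  refine mem_acyc_of (fun i j => ?_) (isAcyclicRel_addArc ht.2 fun h =>
    (reflTransGen_iff_eq_or_transGen.1 h).elim hne.symm hba)
  have hY : Y.Adj i j ↔ (Y.deleteEdges {s(v, w)}).Adj i j ∨ s(i, j) = s(a, b) := by
    rw [deleteEdges_adj_iff, hab]
    by_cases h : s(i, j) = s(v, w)
    · exact iff_of_true (Y.mem_edgeSet.1 (h ▸ Y.mem_edgeSet.2 he)) (Or.inr h)
    · simp [h]
  rw [hY, ht.1.1 i j, Sym2.eq_iff]
  simp only [addArc]
  tauto

lemma eq_addArc_delRel (hab : r a b) (hba : ¬ r b a) (he : s(a, b) = s(v, w)) :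
    r = addArc (delRel r v w) a b := by
  ext i j
  rw [addArc, delRel_iff, ← he, Ne, Sym2.eq_iff]
  constructor
  · intro h
    by_cases hij : (i = a ∧ j = b) ∨ (i = b ∧ j = a)
    · rcases hij with hij | ⟨rfl, rfl⟩
      exacts [Or.inr hij, absurd h hba]
    · exact Or.inl ⟨h, hij⟩
  · rintro (⟨h, -⟩ | ⟨rfl, rfl⟩)
    exacts [h, hab]

lemma delRel_revEdge : delRel (revEdge r v w) v w = delRel r v w := by
  ext i j
  simp only [delRel, revEdge]
  split_ifs with h <;> tauto

lemma revEdge_eq_addArc (hr : r ∈ Acyc Y) (hwv : r w v) :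
    revEdge r v w = addArc (delRel r v w) v w := by
  have h := eq_addArc_delRel (r := revEdge r v w) (v := v) (w := w)
    (by simpa [revEdge] using hwv) (by simpa [revEdge] using hr.1.2 w v hwv) rfl
  rwa [delRel_revEdge] at h

lemma revEdge_mem_iff (he : Y.Adj v w) (hr : r ∈ Acyc Y) (hwv : r w v) :
    revEdge r v w ∈ Acyc Y ↔ ¬ TransGen (delRel r v w) w v := by
  rw [revEdge_eq_addArc hr hwv]
  exact ⟨fun h hp => not_isAcyclicRel_addArc hp h.2, addArc_mem he (delRel_mem hr) rfl⟩

end Deletion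

section Contraction

variable {Y : SimpleGraph V} {v w : V} {r c : V → V → Prop}

open Classical in
noncomputable def contractVertex (v w x : V) : V := if x = w then v else x

lemma contractVertex_of_ne {x : V} (hx : x ≠ w) : contractVertex v w x = x := if_neg hx

@[simp] lemma contractVertex_right : contractVertex v w w = v := if_pos rfl

lemma contractVertex_eq_of_edge {i j : V} (h : s(i, j) = s(v, w)) :
    contractVertex v w i = contractVertex v w j := by
  rcases Sym2.eq_iff.1 h with ⟨rfl, rfl⟩ | ⟨rfl, rfl⟩ <;> simp [contractVertex]

lemma contractG_adj_contractVertex (hvw : v ≠ w) {i j : V} (hij : Y.Adj i j)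
    (hne : s(i, j) ≠ s(v, w)) :
    (contractG Y v w).Adj (contractVertex v w i) (contractVertex v w j) := by
  rw [Ne, Sym2.eq_iff] at hne
  by_cases hi : i = w
  · subst hi
    have hj : j ≠ i := hij.ne.symm
    have hjv : j ≠ v := fun h => hne (Or.inr ⟨rfl, h⟩)
    rw [contractVertex_right, contractVertex_of_ne hj]
    exact ⟨hvw, hj, hjv.symm, Or.inr (Or.inl ⟨rfl, hij⟩)⟩
  by_cases hj : j = w
  · subst hj
    have hiv : i ≠ v := fun h => hne (Or.inl ⟨h, rfl⟩)
    rw [contractVertex_right, contractVertex_of_ne hi]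
    exact ⟨hi, hvw, hiv, Or.inr (Or.inr ⟨rfl, hij⟩)⟩
  rw [contractVertex_of_ne hi, contractVertex_of_ne hj]
  exact ⟨hi, hj, hij.ne, Or.inl (deleteEdges_adj_iff.2 ⟨hij, by rwa [Ne, Sym2.eq_iff]⟩)⟩

def pullbackRel (Y : SimpleGraph V) (v w : V) (c : V → V → Prop) : V → V → Prop :=
  fun i j => Y.Adj i j ∧ c (contractVertex v w i) (contractVertex v w j)

lemma pullbackRel_mem (hvw : v ≠ w) (hc : c ∈ Acyc (contractG Y v w)) :
    pullbackRel Y v w c ∈ Acyc (Y.deleteEdges {s(v, w)}) := by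
  refine mem_acyc_of (fun i j => ?_) (hc.2.of_map _ fun _ _ h => h.2)
  rw [deleteEdges_adj_iff]
  constructor
  · rintro ⟨hij, hne⟩
    rcases (hc.1.1 _ _).1 (contractG_adj_contractVertex hvw hij hne) with h | h
    exacts [Or.inl ⟨hij, h⟩, Or.inr ⟨hij.symm, h⟩]
  · rintro (⟨hij, h⟩ | ⟨hji, h⟩)
    · exact ⟨hij, fun he => hc.2.irrefl _ (contractVertex_eq_of_edge he ▸ h)⟩
    · exact ⟨hji.symm, fun he => hc.2.irrefl _ (contractVertex_eq_of_edge he ▸ h)⟩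

lemma not_transGen_pullbackRel (hc : c ∈ Acyc (contractG Y v w)) {x y : V}
    (hxy : contractVertex v w x = contractVertex v w y) : ¬ TransGen (pullbackRel Y v w c) x y :=
by
  intro h
  have h' : TransGen c (contractVertex v w x) (contractVertex v w y) :=
    TransGen.lift (r := pullbackRel Y v w c) _ (fun _ _ h => h.2) x y h
  exact hc.2 _ (hxy ▸ h')

lemma contractRel_addArc_pullbackRel (he : Y.Adj v w) (hc : c ∈ Acyc (contractG Y v w)) :
    contractRel (addArc (pullbackRel Y v w c) w v) v w = c := by
  ext a b
  rw [contractRel, delRel_addArc (pullbackRel_mem he.ne hc) Sym2.eq_swap]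
  constructor
  · rintro ⟨ha, hb, hab, h | ⟨rfl, h | ⟨-, rfl⟩⟩ | ⟨rfl, h | ⟨rfl, -⟩⟩⟩
    · simpa [contractVertex_of_ne ha, contractVertex_of_ne hb] using h.2
    · simpa [contractVertex_of_ne hb] using h.2
    · exact absurd rfl hab
    · simpa [contractVertex_of_ne ha] using h.2
    · exact absurd rfl ha
  · intro h
    obtain ⟨ha, hb, hab, hadj⟩ := (hc.1.1 a b).2 (Or.inl h)
    refine ⟨ha, hb, hab, ?_⟩
    simp only [pullbackRel, addArc, contractVertex_of_ne ha, contractVertex_of_ne hb,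
      contractVertex_right]
    rcases hadj with hadj | ⟨rfl, hadj⟩ | ⟨rfl, hadj⟩
    · exact Or.inl ⟨(deleteEdges_adj_iff.1 hadj).1, h⟩
    · exact Or.inr (Or.inl ⟨rfl, Or.inl ⟨hadj, h⟩⟩)
    · exact Or.inr (Or.inr ⟨rfl, Or.inl ⟨hadj, h⟩⟩)

lemma map_delRel_of_contractRel {a b : V} (h : contractRel r v w a b) :
    Relation.Map (delRel r v w) (contractVertex v w) (contractVertex v w) a b := by
  obtain ⟨ha, hb, hab, h | ⟨rfl, h⟩ | ⟨rfl, h⟩⟩ := h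
  · exact ⟨a, b, h, contractVertex_of_ne ha, contractVertex_of_ne hb⟩
  · refine ⟨w, b, delRel_iff.2 ⟨h, ?_⟩, contractVertex_right, contractVertex_of_ne hb⟩
    rw [Ne, Sym2.eq_iff]
    rintro (⟨-, rfl⟩ | ⟨-, rfl⟩)
    exacts [hb rfl, hab rfl]
  · refine ⟨a, w, delRel_iff.2 ⟨h, ?_⟩, contractVertex_of_ne ha, contractVertex_right⟩
    rw [Ne, Sym2.eq_iff]
    rintro (⟨rfl, -⟩ | ⟨rfl, -⟩)
    exacts [hab rfl, ha rfl]

lemma contractVertex_eq_contractVertex {x y : V}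
    (h : contractVertex v w x = contractVertex v w y) :
    x = y ∨ x ∈ ({v, w} : Set V) ∧ y ∈ ({v, w} : Set V) := by
  unfold contractVertex at h
  split_ifs at h <;> simp_all

lemma contractRel_mem (he : Y.Adj v w) (hr : r ∈ Acyc Y) (hwv : r w v)
    (hpath : ¬ TransGen (delRel r v w) w v) : contractRel r v w ∈ Acyc (contractG Y v w) := by
  refine mem_acyc_of (fun a b => ?_) ?_
  · show _ ∧ _ ∧ _ ∧ _ ↔ _
    rw [(delRel_mem hr).1.1 a b, hr.1.1 w b, hr.1.1 a w]
    unfold contractRel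
    rw [ne_comm (a := b)]
    tauto
  · have hs := (delRel_mem (v := v) (w := w) hr).2
    refine (hs.map_of_collapse (fun _ _ => contractVertex_eq_contractVertex) ?_).mono
      fun _ _ => map_delRel_of_contractRel
    rintro m (rfl | rfl) m' (rfl | rfl) h
    · exact hs _ h
    · exact hr.2 m ((TransGen.mono (fun _ _ h => h.1) _ _ h).tail hwv)
    · exact hpath h
    · exact hs _ h

lemma contractRel_contractVertex (hvw : v ≠ w) (hr : r ∈ Acyc Y) {i j : V}
    (h : delRel r v w i j) :
    contractRel r v w (contractVertex v w i) (contractVertex v w j) := by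
  obtain ⟨hij, hne⟩ := delRel_iff.1 h
  have hij' : i ≠ j := fun h => hr.2.irrefl _ (h ▸ hij)
  rw [Ne, Sym2.eq_iff] at hne
  by_cases hi : i = w
  · subst hi
    have hjv : j ≠ v := fun h => hne (Or.inr ⟨rfl, h⟩)
    rw [contractVertex_right, contractVertex_of_ne hij'.symm]
    exact ⟨hvw, hij'.symm, hjv.symm, Or.inr (Or.inl ⟨rfl, hij⟩)⟩
  by_cases hj : j = w
  · subst hj
    have hiv : i ≠ v := fun h => hne (Or.inl ⟨h, rfl⟩)
    rw [contractVertex_right, contractVertex_of_ne hi]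
    exact ⟨hi, hvw, hiv, Or.inr (Or.inr ⟨rfl, hij⟩)⟩
  rw [contractVertex_of_ne hi, contractVertex_of_ne hj]
  exact ⟨hi, hj, hij', Or.inl h⟩

lemma addArc_pullbackRel_contractRel (he : Y.Adj v w) (hr : r ∈ Acyc Y) (hwv : r w v)
    (hpath : ¬ TransGen (delRel r v w) w v) :
    addArc (pullbackRel Y v w (contractRel r v w)) w v = r := by
  have hC := contractRel_mem he hr hwv hpath
  conv_rhs => rw [eq_addArc_delRel hwv (hr.1.2 w v hwv) Sym2.eq_swap]
  congr 1
  ext i j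
  constructor
  · rintro ⟨hij, h⟩
    have hne : s(i, j) ≠ s(v, w) := fun e => hC.2.irrefl _ (contractVertex_eq_of_edge e ▸ h)
    rcases (hr.1.1 i j).1 hij with hij | hji
    · exact delRel_iff.2 ⟨hij, hne⟩
    · have hne' : s(j, i) ≠ s(v, w) := Sym2.eq_swap ▸ hne
      exact absurd (contractRel_contractVertex he.ne hr (delRel_iff.2 ⟨hji, hne'⟩))
        (hC.2.asymm h)
  · intro h
    exact ⟨(hr.1.1 i j).2 (Or.inl (delRel_iff.1 h).1), contractRel_contractVertex he.ne hr h⟩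

end Contraction

section Beta

variable {Y : SimpleGraph V} {v w : V} {r t c : V → V → Prop}

def ContractCase (Y : SimpleGraph V) (v w : V) (r : V → V → Prop) : Prop :=
  r w v ∧ revEdge r v w ∈ Acyc Y

open Classical in
noncomputable def deletionLift (t : V → V → Prop) (v w : V) : V → V → Prop :=
  if TransGen t w v then addArc t w v else addArc t v w

lemma deletionLift_mem (he : Y.Adj v w) (ht : t ∈ Acyc (Y.deleteEdges {s(v, w)})) :
    deletionLift t v w ∈ Acyc Y := by
  unfold deletionLift
  split_ifs with hwv
  · exact addArc_mem he ht Sym2.eq_swap fun hvw => ht.2 w (hwv.trans hvw)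
  · exact addArc_mem he ht rfl hwv

lemma delRel_deletionLift (ht : t ∈ Acyc (Y.deleteEdges {s(v, w)})) :
    delRel (deletionLift t v w) v w = t := by
  unfold deletionLift
  split_ifs
  exacts [delRel_addArc ht Sym2.eq_swap, delRel_addArc ht rfl]

lemma not_contractCase_deletionLift (he : Y.Adj v w)
    (ht : t ∈ Acyc (Y.deleteEdges {s(v, w)})) : ¬ ContractCase Y v w (deletionLift t v w) := by
  rintro ⟨hwv, hrev⟩
  rw [revEdge_mem_iff he (deletionLift_mem he ht) hwv, delRel_deletionLift ht] at hrev
  rw [deletionLift, if_neg hrev] at hwv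
  rcases hwv with h | ⟨h, -⟩
  exacts [edge_ne_of_mem_acyc_deleteEdges ht h Sym2.eq_swap, he.ne h.symm]

lemma deletionLift_delRel (he : Y.Adj v w) (hr : r ∈ Acyc Y) (h : ¬ ContractCase Y v w r) :
    deletionLift (delRel r v w) v w = r := by
  unfold deletionLift
  rcases (hr.1.1 v w).1 he with hvw | hwv
  · have hpath : ¬ TransGen (delRel r v w) w v := fun hp =>
      hr.2 v (.head hvw (TransGen.mono (fun _ _ h => h.1) _ _ hp))
    rw [if_neg hpath]
    exact (eq_addArc_delRel hvw (hr.1.2 v w hvw) rfl).symm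
  · have hpath : TransGen (delRel r v w) w v := by
      by_contra hp
      exact h ⟨hwv, (revEdge_mem_iff he hr hwv).2 hp⟩
    rw [if_pos hpath]
    exact (eq_addArc_delRel hwv (hr.1.2 w v hwv) Sym2.eq_swap).symm

lemma addArc_pullbackRel_mem (he : Y.Adj v w) (hc : c ∈ Acyc (contractG Y v w)) :
    addArc (pullbackRel Y v w c) w v ∈ Acyc Y :=
  addArc_mem he (pullbackRel_mem he.ne hc) Sym2.eq_swap
    (not_transGen_pullbackRel hc (contractVertex_eq_of_edge rfl))

lemma contractCase_addArc_pullbackRel (he : Y.Adj v w) (hc : c ∈ Acyc (contractG Y v w)) :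
    ContractCase Y v w (addArc (pullbackRel Y v w c) w v) := by
  refine ⟨Or.inr ⟨rfl, rfl⟩,
    (revEdge_mem_iff he (addArc_pullbackRel_mem he hc) (Or.inr ⟨rfl, rfl⟩)).2 ?_⟩
  rw [delRel_addArc (pullbackRel_mem he.ne hc) Sym2.eq_swap]
  exact not_transGen_pullbackRel hc (contractVertex_eq_of_edge Sym2.eq_swap)

noncomputable def deletionEquiv (he : Y.Adj v w) :
    {o : Acyc Y // ¬ ContractCase Y v w o.1} ≃ Acyc (Y.deleteEdges {s(v, w)}) where
  toFun o := ⟨delRel o.1.1 v w, delRel_mem o.1.2⟩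
  invFun t :=
    ⟨⟨deletionLift t.1 v w, deletionLift_mem he t.2⟩, not_contractCase_deletionLift he t.2⟩
  left_inv o := Subtype.ext (Subtype.ext (deletionLift_delRel he o.1.2 o.2))
  right_inv t := Subtype.ext (delRel_deletionLift t.2)

noncomputable def contractionEquiv (he : Y.Adj v w) :
    {o : Acyc Y // ContractCase Y v w o.1} ≃ Acyc (contractG Y v w) where
  toFun o := ⟨contractRel o.1.1 v w,
    contractRel_mem he o.1.2 o.2.1 ((revEdge_mem_iff he o.1.2 o.2.1).1 o.2.2)⟩
  invFun c := ⟨⟨addArc (pullbackRel Y v w c.1) w v, addArc_pullbackRel_mem he c.2⟩,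
    contractCase_addArc_pullbackRel he c.2⟩
  left_inv o := Subtype.ext (Subtype.ext (addArc_pullbackRel_contractRel he o.1.2 o.2.1
    ((revEdge_mem_iff he o.1.2 o.2.1).1 o.2.2)))
  right_inv c := Subtype.ext (contractRel_addArc_pullbackRel he c.2)

open Classical in
noncomputable def betaEquiv (he : Y.Adj v w) :
    Acyc Y ≃ Acyc (Y.deleteEdges {s(v, w)}) ⊕ Acyc (contractG Y v w) :=
  (Equiv.sumCompl fun o : Acyc Y => ContractCase Y v w o.1).symm.trans
    ((Equiv.sumComm _ _).trans ((deletionEquiv he).sumCongr (contractionEquiv he)))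

open Classical in
lemma betaEquiv_apply_of_not_contractCase (he : Y.Adj v w) {o : Acyc Y}
    (h : ¬ ContractCase Y v w o.1) :
    betaEquiv he o = Sum.inl ⟨delRel o.1 v w, delRel_mem o.2⟩ := by
  rw [betaEquiv, Equiv.trans_apply,
    Equiv.sumCompl_symm_apply_of_neg (p := fun o : Acyc Y => ContractCase Y v w o.1) h]
  rfl

open Classical in
lemma betaEquiv_apply_of_contractCase (he : Y.Adj v w) {o : Acyc Y}
    (h : ContractCase Y v w o.1) :
    betaEquiv he o = Sum.inr ⟨contractRel o.1 v w,
      contractRel_mem he o.2 h.1 ((revEdge_mem_iff he o.2 h.1).1 h.2)⟩ := by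
  rw [betaEquiv, Equiv.trans_apply,
    Equiv.sumCompl_symm_apply_of_pos (p := fun o : Acyc Y => ContractCase Y v w o.1) h]
  rfl

end Beta

theorem beta_bijection_general {V : Type*}
    (Y : SimpleGraph V) (v w : V) (he : Y.Adj v w) :
    (∀ r ∈ Acyc Y, Xor' (revEdge r v w ∉ Acyc Y) (revEdge r v w ∈ Acyc Y)) ∧
    ∃ β : Acyc Y → (Acyc (Y.deleteEdges {s(v, w)}) ⊕ Acyc (contractG Y v w)),
      Function.Bijective β ∧
      (∀ o : Acyc Y,
        (revEdge o.1 v w ∉ Acyc Y ∨ (revEdge o.1 v w ∈ Acyc Y ∧ o.1 v w)) →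
        ∃ h, β o = Sum.inl ⟨delRel o.1 v w, h⟩) ∧
      (∀ o : Acyc Y, revEdge o.1 v w ∈ Acyc Y → o.1 w v →
        ∃ h, β o = Sum.inr ⟨contractRel o.1 v w, h⟩) := by
  refine ⟨fun r _ => xor_not_left.2 Iff.rfl, betaEquiv he, (betaEquiv he).bijective, ?_, ?_⟩
  · intro o ho
    refine ⟨_, betaEquiv_apply_of_not_contractCase he ?_⟩
    rintro ⟨hwv, hrev⟩
    rcases ho with ho | ⟨-, hvw⟩
    exacts [ho hrev, o.2.1.2 v w hvw hwv]
  · exact fun o hrev hwv => ⟨_, betaEquiv_apply_of_contractCase he ⟨hwv, hrev⟩⟩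

/-- for an acyclic orientation O and a non-bridge edge e = {v,w},
exactly one of "reversing e breaks acyclicity" and "reversing e preserves
acyclicity" holds, and the map β_e — sending O to its restriction to Y−e when
the reversal is not acyclic or e is oriented (v,w), and to the induced
orientation of Y/e when e is oriented (w,v) and the reversal is acyclic —
is a bijection from Acyc(Y) onto Acyc(Y−e) ∪ Acyc(Y/e). -/
theorem beta_bijection {V : Type*} [Fintype V] [DecidableEq V]
    (Y : SimpleGraph V) (v w : V) (he : Y.Adj v w)
    (hnonbridge : (Y.deleteEdges {s(v, w)}).Reachable v w) :
    (∀ r ∈ Acyc Y, Xor' (revEdge r v w ∉ Acyc Y) (revEdge r v w ∈ Acyc Y)) ∧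
    ∃ β : Acyc Y → (Acyc (Y.deleteEdges {s(v, w)}) ⊕ Acyc (contractG Y v w)),
      Function.Bijective β ∧
      (∀ o : Acyc Y,
        (revEdge o.1 v w ∉ Acyc Y ∨ (revEdge o.1 v w ∈ Acyc Y ∧ o.1 v w)) →
        ∃ h, β o = Sum.inl ⟨delRel o.1 v w, h⟩) ∧
      (∀ o : Acyc Y, revEdge o.1 v w ∈ Acyc Y → o.1 w v →
        ∃ h, β o = Sum.inr ⟨contractRel o.1 v w, h⟩) :=
  beta_bijection_general Y v w he

end AcycPaper
end

section
/- Converting a source vertex into a sink (a 'click') in an acyclic orientation of a graph yields again an acyclic orientation, and the relation generated by clicks on Acyc(Y) is an equivalence relation. -/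
namespace AcycPaper

variable {V : Type*}

/-!
Clicking a source `v` reverses exactly the edges between `{v}` and its complement. More
generally, for a set `P` that no edge of `r` enters, reversing the edges between `P` and `Pᶜ`
keeps `r` acyclic: afterwards edges only cross from `Pᶜ` into `P`, so no cycle crosses at all.
Such a `P` can be enlarged by an `r`-minimal vertex outside it, which is a source of the reversed
orientation; clicking it is the enlargement. Starting from `{v}` and ending at the whole vertex
set, where nothing is reversed, this undoes the click at `v`, so the reflexive-transitive closure
of clicks is symmetric.
-/

open Relation Set

variable {Y : SimpleGraph V} {r : V → V → Prop} {P : Set V} {v : V}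

def IsLowerSetOf (r : V → V → Prop) (P : Set V) : Prop :=
  ∀ ⦃i j⦄, r i j → j ∈ P → i ∈ P

lemma IsLowerSetOf.insert (hP : IsLowerSetOf r P) (hv : ∀ j, r j v → j ∈ P) :
    IsLowerSetOf r (insert v P) := by
  rintro i j hij (rfl | hj)
  · exact mem_insert_of_mem _ (hv i hij)
  · exact mem_insert_of_mem _ (hP hij hj)

lemma isLowerSetOf_singleton (hv : IsSource r v) : IsLowerSetOf r {v} := by
  rintro i j hij rfl
  exact absurd hij (hv i)

open Classical in
/-- The orientation reached from `r` by clicking each vertex of `P` once, in any admissible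
order. -/
def clickSet (r : V → V → Prop) (P : Set V) : V → V → Prop :=
  fun i j => if (i ∈ P ↔ j ∈ P) then r i j else r j i

lemma clickSet_of_iff {i j : V} (h : i ∈ P ↔ j ∈ P) : clickSet r P i j = r i j := if_pos h

lemma clickSet_of_not_iff {i j : V} (h : ¬(i ∈ P ↔ j ∈ P)) : clickSet r P i j = r j i := if_neg h

lemma clickSet_empty (r : V → V → Prop) : clickSet r ∅ = r := by
  ext i j
  rw [clickSet_of_iff (iff_of_false (notMem_empty i) (notMem_empty j))]

lemma clickSet_univ (r : V → V → Prop) : clickSet r univ = r := by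
  ext i j
  rw [clickSet_of_iff (iff_of_true (mem_univ i) (mem_univ j))]

lemma click_clickSet (hv : v ∉ P) : click (clickSet r P) v = clickSet r (insert v P) := by
  classical
  ext i j
  simp only [click, clickSet, mem_insert_iff]
  by_cases hi : i = v <;> by_cases hj : j = v
  · subst hi hj; simp
  · subst hi; by_cases hjP : j ∈ P <;> simp [hj, hjP, hv, Ne.symm hj]
  · subst hj; by_cases hiP : i ∈ P <;> simp [hi, hiP, hv, Ne.symm hi]
  · simp [hi, hj, Ne.symm hi, Ne.symm hj]

lemma click_eq_clickSet_singleton (r : V → V → Prop) (v : V) : click r v = clickSet r {v} := by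
  rw [← clickSet_empty r, click_clickSet (notMem_empty v), clickSet_empty, insert_empty_eq]

lemma isOrientation_clickSet (hr : IsOrientation Y r) (P : Set V) :
    IsOrientation Y (clickSet r P) := by
  refine ⟨fun i j => ?_, fun i j => ?_⟩ <;> by_cases h : i ∈ P ↔ j ∈ P
  · rw [clickSet_of_iff h, clickSet_of_iff h.symm]
    exact hr.1 i j
  · rw [clickSet_of_not_iff h, clickSet_of_not_iff (mt Iff.symm h)]
    exact (hr.1 i j).trans or_comm
  · rw [clickSet_of_iff h, clickSet_of_iff h.symm]
    exact hr.2 i j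
  · rw [clickSet_of_not_iff h, clickSet_of_not_iff (mt Iff.symm h)]
    exact hr.2 j i

lemma mem_of_clickSet (hP : IsLowerSetOf r P) {i j : V} (h : clickSet r P i j) (hi : i ∈ P) :
    j ∈ P := by
  by_contra hj
  rw [clickSet_of_not_iff (by tauto)] at h
  exact hj (hP h hi)

lemma mem_of_transGen_clickSet (hP : IsLowerSetOf r P) {a b : V}
    (h : TransGen (clickSet r P) a b) (ha : a ∈ P) : b ∈ P := by
  induction h with
  | single h => exact mem_of_clickSet hP h ha
  | tail _ h ih => exact mem_of_clickSet hP h ih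

/-- Edges of `clickSet r P` cross from `Pᶜ` into `P` only, so a path between two vertices on the
same side stays on that side, where `clickSet r P` agrees with `r`. -/
lemma transGen_of_transGen_clickSet (hP : IsLowerSetOf r P) {a b : V}
    (h : TransGen (clickSet r P) a b) (hab : a ∈ P ↔ b ∈ P) : TransGen r a b := by
  induction h with
  | single h => exact .single ((clickSet_of_iff hab).mp h)
  | @tail c b hac hcb ih =>
    have hac' : a ∈ P ↔ c ∈ P := by
      by_cases ha : a ∈ P
      · exact iff_of_true ha (mem_of_transGen_clickSet hP hac ha)
      · exact iff_of_false ha fun hc => hab.not.1 ha (mem_of_clickSet hP hcb hc)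
    exact (ih hac').tail ((clickSet_of_iff (hac'.symm.trans hab)).mp hcb)

lemma clickSet_mem_acyc (hr : r ∈ Acyc Y) (hP : IsLowerSetOf r P) : clickSet r P ∈ Acyc Y :=
  ⟨isOrientation_clickSet hr.1 P, fun v hv => hr.2 v (transGen_of_transGen_clickSet hP hv Iff.rfl)⟩

lemma click_mem_acyc (hr : r ∈ Acyc Y) (hv : IsSource r v) : click r v ∈ Acyc Y :=
  click_eq_clickSet_singleton r v ▸ clickSet_mem_acyc hr (isLowerSetOf_singleton hv)

lemma isSource_clickSet (hP : IsLowerSetOf r P) (hv : v ∉ P) (hmin : ∀ j, r j v → j ∈ P) :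
    IsSource (clickSet r P) v := by
  intro j h
  by_cases hj : j ∈ P
  · rw [clickSet_of_not_iff (by tauto)] at h
    exact hv (hP h hj)
  · rw [clickSet_of_iff (by tauto)] at h
    exact hj (hmin j h)

lemma IsAcyclicRel.wellFounded [Finite V] (hr : IsAcyclicRel r) : WellFounded r :=
  have : IsTrans V (TransGen r) := ⟨fun _ _ _ => TransGen.trans⟩
  have : Std.Irrefl (TransGen r) := ⟨hr⟩
  Subrelation.wf TransGen.single (Finite.wellFounded_of_trans_of_irrefl (TransGen r))

lemma reflTransGen_clickSet [Finite V] (hr : r ∈ Acyc Y) (hP : IsLowerSetOf r P) :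
    ReflTransGen (ClickStep Y) (clickSet r P) r := by
  suffices h : IsLowerSetOf r ⊤ ∧ ReflTransGen (ClickStep Y) (clickSet r P) (clickSet r ⊤) by
    simpa only [top_eq_univ, clickSet_univ] using h.2
  refine WellFoundedGT.induction_top ⟨P, hP, .refl⟩ ?_
  rintro Q hQ ⟨hQr, hPQ⟩
  obtain ⟨v, hv, hmin⟩ := hr.2.wellFounded.has_min Qᶜ (nonempty_compl.2 hQ)
  have hmin' : ∀ j, r j v → j ∈ Q := fun j hj => by_contra fun hjQ => hmin j hjQ hj
  have step : ClickStep Y (clickSet r Q) (clickSet r (insert v Q)) :=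
    ⟨clickSet_mem_acyc hr hQr, v, isSource_clickSet hQr hv hmin', (click_clickSet hv).symm⟩
  exact ⟨insert v Q, ssubset_insert hv, hQr.insert hmin', hPQ.tail step⟩

lemma ClickStep.reflTransGen_reverse [Finite V] {r' : V → V → Prop} (h : ClickStep Y r r') :
    ReflTransGen (ClickStep Y) r' r := by
  obtain ⟨hr, v, hv, rfl⟩ := h
  rw [click_eq_clickSet_singleton]
  exact reflTransGen_clickSet hr (isLowerSetOf_singleton hv)

/-- clicking a source of an acyclic orientation yields again an
acyclic orientation, and the relation generated by clicks on Acyc(Y) is an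
equivalence relation (reflexive, symmetric and transitive). -/
theorem click_acyclic_and_equivalence {V : Type*} [Fintype V] (Y : SimpleGraph V) :
    (∀ r ∈ Acyc Y, ∀ v, IsSource r v → click r v ∈ Acyc Y) ∧
    Equivalence (fun a b : Acyc Y => Relation.ReflTransGen (ClickStep Y) a.1 b.1) := by
  have symm : ∀ {r r'}, ReflTransGen (ClickStep Y) r r' → ReflTransGen (ClickStep Y) r' r :=
    fun h => ReflTransGen.lift' id (fun _ _ => ClickStep.reflTransGen_reverse) _ _ h.swap
  exact ⟨fun r hr v hv => click_mem_acyc hr hv, ⟨fun _ => .refl, symm, .trans⟩⟩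

end AcycPaper
end

section
/- Let Y be a connected graph on n vertices and π a permutation of its vertices. For distinct powers g ≠ g′ of the cyclic shift σ = (n, n−1, ..., 2, 1) acting on positions, the permutations g·π and g′·π are not ∼_Y equivalent. -/
/-
An update step swaps two consecutive entries that are non-adjacent in `Y`, so for every edge
`{u, v}` of `Y` the relative order of `u` and `v` is an invariant of `∼_Y`. For `s < s'`, let `A`
be the set of vertices sitting in positions `[s, s')` of `π`; it contains `π s` but not `π s'`,
so connectedness yields an edge `{u, v}` with `u ∈ A`, `v ∉ A`. Shifting by `s` puts `u` before
`v`, while shifting by `s'` moves `u` past the end and puts it after `v`.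
-/

theorem Equiv.swap_lt_swap_iff_of_covBy {α : Type*} [LinearOrder α] {i j p q : α}
    (hij : i ⋖ j) (hpq : ¬(p = i ∧ q = j)) (hqp : ¬(p = j ∧ q = i)) :
    Equiv.swap i j p < Equiv.swap i j q ↔ p < q := by
  have hi : ∀ x, i < x ↔ j ≤ x := fun x => ⟨fun hx => not_lt.1 (hij.2 hx), hij.lt.trans_le⟩
  have hj : ∀ x, x < j ↔ x ≤ i := fun x => ⟨hij.le_of_lt, fun hx => hx.trans_lt hij.lt⟩
  simp only [Equiv.swap_apply_def]
  split_ifs <;> grind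

theorem Fin.mk_covBy_mk_add_one {n k : ℕ} (hk : k + 1 < n) :
    (⟨k, Nat.lt_of_succ_lt hk⟩ : Fin n) ⋖ ⟨k + 1, hk⟩ :=
  ⟨by simp [Fin.lt_def], fun c h₁ h₂ => by simp only [Fin.lt_def] at h₁ h₂; omega⟩

theorem Fin.sub_lt_sub_and_sub_lt_sub_of_mem_Ico {n : ℕ} {p q s t : Fin n}
    (hp : p ∈ Set.Ico s t) (hq : q ∉ Set.Ico s t) : p - s < q - s ∧ q - t < p - t := by
  simp only [Set.mem_Ico, not_and_or, not_le, not_lt] at hp hq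
  rw [Fin.lt_def, Fin.lt_def, Fin.sub_val_of_le hp.1, Fin.coe_sub_iff_lt.2 hp.2]
  rcases hq with hq | hq
  · rw [Fin.coe_sub_iff_lt.2 hq, Fin.coe_sub_iff_lt.2 (hq.trans_le (hp.1.trans hp.2.le))]
    omega
  · rw [Fin.sub_val_of_le (hp.1.trans hp.2.le |>.trans hq), Fin.sub_val_of_le hq]
    omega

theorem finRotate_pow_eq_finCycle {n s : ℕ} (hs : s < n) :
    finRotate n ^ s = finCycle ⟨s, hs⟩ := by
  ext x
  rw [finCycle_eq_finRotate_iterate, Equiv.Perm.iterate_eq_pow]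

theorem inv_mul_finRotate_pow_apply {n s : ℕ} (hs : s < n) (π : Equiv.Perm (Fin n))
    (u : Fin n) : (π * finRotate n ^ s)⁻¹ u = π⁻¹ u - ⟨s, hs⟩ := by
  rw [finRotate_pow_eq_finCycle hs, mul_inv_rev, Equiv.Perm.mul_apply, Equiv.Perm.inv_def,
    finCycle_symm_apply]

theorem SimpleGraph.Preconnected.exists_adj_mem_notMem {V : Type*} {G : SimpleGraph V}
    (hG : G.Preconnected) {A : Set V} {a b : V} (ha : a ∈ A) (hb : b ∉ A) :
    ∃ u v, G.Adj u v ∧ u ∈ A ∧ v ∉ A := by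
  obtain ⟨d, -, hd, hd'⟩ := (hG a b).some.exists_boundary_dart A ha hb
  exact ⟨d.fst, d.snd, d.adj, hd, hd'⟩

namespace AcycPaper

section UpdateAdj

variable {n : ℕ} {Y : SimpleGraph (Fin n)} {a b : Equiv.Perm (Fin n)} {u v : Fin n}

theorem UpdateAdj.inv_lt_inv_iff (h : UpdateAdj Y a b) (huv : Y.Adj u v) :
    b⁻¹ u < b⁻¹ v ↔ a⁻¹ u < a⁻¹ v := by
  obtain ⟨k, hk, hna, rfl⟩ := h
  rw [mul_inv_rev, Equiv.swap_inv, Equiv.Perm.mul_apply, Equiv.Perm.mul_apply]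
  refine Equiv.swap_lt_swap_iff_of_covBy (Fin.mk_covBy_mk_add_one hk) ?_ ?_
  · rintro ⟨hu, hv⟩
    exact hna (by simpa [← hu, ← hv] using huv)
  · rintro ⟨hu, hv⟩
    exact hna (by simpa [← hu, ← hv] using huv.symm)

theorem inv_lt_inv_iff_of_eqvGen_updateAdj (h : Relation.EqvGen (UpdateAdj Y) a b)
    (huv : Y.Adj u v) : a⁻¹ u < a⁻¹ v ↔ b⁻¹ u < b⁻¹ v := by
  induction h with
  | rel a b hab => exact (hab.inv_lt_inv_iff huv).symm
  | refl => rfl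
  | symm _ _ _ ih => exact ih.symm
  | trans _ _ _ _ _ ih₁ ih₂ => exact ih₁.trans ih₂

end UpdateAdj

/-- for a connected graph Y on n vertices and distinct powers
σ^s ≠ σ^{s'} (0 ≤ s, s' < n) of the cyclic shift acting on positions, the
shifted permutations σ^s·π and σ^{s'}·π are not ∼_Y equivalent. -/
theorem distinct_shifts_not_equivalent {n : ℕ} (Y : SimpleGraph (Fin n))
    (hY : Y.Connected) (π : Equiv.Perm (Fin n)) (s s' : ℕ)
    (hs : s < n) (hs' : s' < n) (hne : s ≠ s') :
    ¬ Relation.EqvGen (UpdateAdj Y) (π * (finRotate n) ^ s) (π * (finRotate n) ^ s') := by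
  wlog hlt : s < s' generalizing s s'
  · exact fun h => this s' s hs' hs hne.symm (by omega) h.symm
  intro h
  obtain ⟨u, v, huv, hu, hv⟩ := hY.preconnected.exists_adj_mem_notMem
    (A := {w | π⁻¹ w ∈ Set.Ico ⟨s, hs⟩ ⟨s', hs'⟩}) (a := π ⟨s, hs⟩) (b := π ⟨s', hs'⟩)
    (by simp [Fin.lt_def, hlt]) (by simp)
  have hkey := inv_lt_inv_iff_of_eqvGen_updateAdj h huv
  simp only [inv_mul_finRotate_pow_apply hs, inv_mul_finRotate_pow_apply hs'] at hkey
  obtain ⟨hbefore, hafter⟩ := Fin.sub_lt_sub_and_sub_lt_sub_of_mem_Ico hu hv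
  exact (hkey.1 hbefore).asymm hafter

end AcycPaper
end

section
/- Let Y be a connected graph on n vertices and π a permutation of its vertices. If g ≠ g′ are elements of the dihedral group D_n = ⟨σ, ρ⟩ acting on positions and [g·π]_Y = [g′·π]_Y, then Y is bipartite. -/
namespace Fin

theorem add_lt_add_right_iff_carry {n : ℕ} (p q c : Fin n) :
    p + c < q + c ↔ (p < q ↔ (p.val + c.val < n ↔ q.val + c.val < n)) := by
  simp only [lt_def, val_add_eq_ite]
  split_ifs <;> omega

theorem swap_lt_swap_iff {n : ℕ} {a b p q : Fin n} (hab : b.val = a.val + 1)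
    (hpq : s(p, q) ≠ s(a, b)) : Equiv.swap a b p < Equiv.swap a b q ↔ p < q := by
  simp only [Sym2.eq_iff, not_or, not_and_or, ne_eq, Fin.ext_iff] at hpq
  simp only [Equiv.swap_apply_def, lt_def]
  split_ifs <;> simp only [Fin.ext_iff] at * <;> omega

theorem exists_eq_add_or_eq_rev_add_of_mem_closure {n : ℕ} [NeZero n] {x : Equiv.Perm (Fin n)}
    (hx : x ∈ Subgroup.closure {finRotate n, Fin.revPerm}) :
    ∃ c, (∀ p, x p = p + c) ∨ (∀ p, x p = rev (p + c)) := by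
  induction hx using Subgroup.closure_induction with
  | mem y hy =>
    rcases hy with rfl | rfl
    · exact ⟨1, .inl finRotate_apply⟩
    · exact ⟨0, .inr fun p => by simp⟩
  | one => exact ⟨0, .inl fun p => by simp⟩
  | mul y z _ _ hy hz =>
    obtain ⟨c, hy | hy⟩ := hy <;> obtain ⟨d, hz | hz⟩ := hz
    · exact ⟨d + c, .inl fun p => by simp [hy, hz, add_assoc]⟩
    · exact ⟨d - c, .inr fun p => by simp [hy, hz, ← rev_sub, add_sub_assoc]⟩
    · exact ⟨d + c, .inr fun p => by simp [hy, hz, add_assoc]⟩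
    · exact ⟨d - c, .inl fun p => by simp [hy, hz, ← rev_sub, add_sub_assoc]⟩
  | inv y _ hy =>
    obtain ⟨c, hy | hy⟩ := hy
    · exact ⟨-c, .inl fun p => by rw [Equiv.Perm.inv_eq_iff_eq, hy]; abel⟩
    · exact ⟨c, .inr fun p => by rw [Equiv.Perm.inv_eq_iff_eq, hy, rev_add]; simp⟩

end Fin

namespace SimpleGraph

variable {V : Type*} {n : ℕ} {Y : SimpleGraph V}

theorem Preconnected.apply_eq_of_adj {β : Type*} (hY : Y.Preconnected) {f : V → β}
    (hf : ∀ u v, Y.Adj u v → f u = f v) (u v : V) : f u = f v := by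
  obtain ⟨p⟩ := hY u v
  induction p with
  | nil => rfl
  | cons h _ ih => exact (hf _ _ h).trans ih

theorem Preconnected.eq_zero_of_add_lt_add_iff [NeZero n] (hY : Y.Preconnected) (f : V ≃ Fin n)
    {c : Fin n} (hc : ∀ u v, Y.Adj u v → (f u + c < f v + c ↔ f u < f v)) : c = 0 := by
  have hcarry := hY.apply_eq_of_adj (f := fun v => (f v).val + c.val < n) fun u v huv => by
    have := (Fin.add_lt_add_right_iff_carry _ _ c).symm.trans (hc u v huv)
    exact propext (by tauto)
  by_contra hc0
  -- position `0` does not wrap around, position `n - c` does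
  have := hcarry (f.symm 0) (f.symm ⟨n - c.val, by have := Fin.pos_iff_ne_zero.2 hc0; omega⟩)
  simp at this

theorem colorable_two_of_rev_add_lt_rev_add_iff {f : V → Fin n} (hf : Function.Injective f)
    {c : Fin n} (hc : ∀ u v, Y.Adj u v → ((f u + c).rev < (f v + c).rev ↔ f u < f v)) :
    Y.Colorable 2 := by
  refine (Coloring.mk (fun v => decide ((f v).val + c.val < n)) fun {u v} huv => ?_).colorable
  have hcarry := hc u v huv
  rw [Fin.rev_lt_rev, Fin.add_lt_add_right_iff_carry] at hcarry
  have htotal := lt_or_gt_of_ne (hf.ne huv.ne)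
  have hasymm := @lt_asymm _ _ (f u) (f v)
  simp only [ne_eq, decide_eq_decide]
  tauto

end SimpleGraph

namespace AcycPaper

open Equiv

variable {n : ℕ} {Y : SimpleGraph (Fin n)}

theorem UpdateAdj.inv_lt_inv_iff_s9 {τ τ' : Perm (Fin n)} (h : UpdateAdj Y τ τ') {u v : Fin n}
    (huv : Y.Adj u v) : τ⁻¹ u < τ⁻¹ v ↔ τ'⁻¹ u < τ'⁻¹ v := by
  obtain ⟨k, hk, hnadj, rfl⟩ := h
  rw [mul_inv_rev, swap_inv, Perm.mul_apply, Perm.mul_apply]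
  refine (Fin.swap_lt_swap_iff rfl fun heq => hnadj ?_).symm
  rcases Sym2.eq_iff.1 heq with ⟨hu, hv⟩ | ⟨hu, hv⟩
  · obtain rfl := Perm.inv_eq_iff_eq.1 hu
    obtain rfl := Perm.inv_eq_iff_eq.1 hv
    exact huv
  · obtain rfl := Perm.inv_eq_iff_eq.1 hu
    obtain rfl := Perm.inv_eq_iff_eq.1 hv
    exact huv.symm

theorem inv_lt_inv_iff_of_eqvGen {τ τ' : Perm (Fin n)} (h : Relation.EqvGen (UpdateAdj Y) τ τ')
    {u v : Fin n} (huv : Y.Adj u v) : τ⁻¹ u < τ⁻¹ v ↔ τ'⁻¹ u < τ'⁻¹ v := by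
  induction h with
  | rel _ _ h => exact h.inv_lt_inv_iff_s9 huv
  | refl => rfl
  | symm _ _ _ ih => exact ih.symm
  | trans _ _ _ _ _ ih₁ ih₂ => exact ih₁.trans ih₂

/-- if Y is connected on n vertices, g ≠ g' are elements of the
dihedral group D_n = ⟨σ, ρ⟩ (generated by the cyclic shift and the reversal,
acting on positions), and g·π ∼_Y g'·π, then Y is bipartite (2-colorable). -/
theorem dihedral_coincidence_implies_bipartite {n : ℕ} (Y : SimpleGraph (Fin n))
    (hY : Y.Connected) (π : Equiv.Perm (Fin n)) (g g' : Equiv.Perm (Fin n))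
    (hg : g ∈ Subgroup.closure {finRotate n, Fin.revPerm})
    (hg' : g' ∈ Subgroup.closure {finRotate n, Fin.revPerm})
    (hne : g ≠ g')
    (h : Relation.EqvGen (UpdateAdj Y) (π * g) (π * g')) :
    Y.Colorable 2 := by
  have : NeZero n := ⟨by rintro rfl; exact hne (Subsingleton.elim _ _)⟩
  set f := (π * g')⁻¹
  have horder : ∀ u v, Y.Adj u v → ((g⁻¹ * g') (f u) < (g⁻¹ * g') (f v) ↔ f u < f v) :=
    fun u v huv => by simpa [f, mul_assoc] using inv_lt_inv_iff_of_eqvGen h huv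
  obtain ⟨c, hrot | hrefl⟩ :=
    Fin.exists_eq_add_or_eq_rev_add_of_mem_closure (mul_mem (inv_mem hg) hg')
  · have hc := hY.preconnected.eq_zero_of_add_lt_add_iff f (by simpa [hrot] using horder)
    exact absurd (inv_mul_eq_one.1 (Equiv.ext fun p => by simp [hrot, hc])) hne
  · exact SimpleGraph.colorable_two_of_rev_add_lt_rev_add_iff f.injective
      (by simpa [hrefl] using horder)

end AcycPaper
end

section
/- The reversal operation on acyclic orientations (reversing every edge orientation) descends to a well-defined involution ρ* on the set of κ-equivalence classes Acyc(Y)/∼_κ. -/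
namespace AcycPaper

variable {V : Type*}

/-- The reversal of an orientation: every edge direction is reversed. -/
def reverseRel (r : V → V → Prop) : V → V → Prop := fun i j => r j i

lemma rev_mem_acyc (Y : SimpleGraph V) {r : V → V → Prop} (hr : r ∈ Acyc Y) :
    reverseRel r ∈ Acyc Y := by
  obtain ⟨⟨h1, h2⟩, h3⟩ := hr
  refine ⟨⟨fun i j => ?_, fun i j h => h2 j i h⟩, fun v hv => h3 v ?_⟩
  · rw [h1 i j]; exact or_comm
  · have : Relation.TransGen (Function.swap r) v v := hv
    rw [Relation.transGen_swap] at this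
    exact this

lemma click_click (r : V → V → Prop) (v : V) : click (click r v) v = r := by
  funext i j
  simp only [click]
  by_cases h : v = i ∨ v = j
  · rw [if_pos h, if_pos h.symm]
  · rw [if_neg h, if_neg h]

lemma rev_click (r : V → V → Prop) (v : V) :
    reverseRel (click r v) = click (reverseRel r) v := by
  funext i j
  simp only [reverseRel, click]
  by_cases h : v = i ∨ v = j
  · rw [if_pos h.symm, if_pos h]
  · rw [if_neg (fun hh => h hh.symm), if_neg h]

lemma clickstep_rev (Y : SimpleGraph V) {a b : V → V → Prop}
    (hb : b ∈ Acyc Y) (h : ClickStep Y a b) :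
    ClickStep Y (reverseRel b) (reverseRel a) := by
  obtain ⟨ha, v, hv, rfl⟩ := h
  refine ⟨rev_mem_acyc Y hb, v, ?_, ?_⟩
  · intro j hj
    have : click a v v j := hj
    simp only [click, if_pos (Or.inl rfl)] at this
    exact hv j this
  · rw [rev_click, click_click]

/-- reversing all edge orientations maps acyclic orientations to
acyclic orientations and descends to a well-defined involution ρ* on the set
Acyc(Y)/∼_κ of κ-equivalence classes. -/
theorem reversal_involution_on_kappa_classes {V : Type*} [Fintype V]
    (Y : SimpleGraph V) :
    (∀ r ∈ Acyc Y, reverseRel r ∈ Acyc Y) ∧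
    ∃ f : KQuot Y → KQuot Y, Function.Involutive f ∧
      ∀ (o o' : Acyc Y), o'.1 = reverseRel o.1 →
        f (Quot.mk _ o) = Quot.mk _ o' := by
  refine ⟨fun r hr => rev_mem_acyc Y hr, ?_⟩
  set R := fun a b : Acyc Y => ClickStep Y a.1 b.1 with hR
  have revsub : Acyc Y → Acyc Y := fun o => ⟨reverseRel o.1, rev_mem_acyc Y o.2⟩
  refine ⟨Quot.lift (fun o : Acyc Y =>
      Quot.mk R ⟨reverseRel o.1, rev_mem_acyc Y o.2⟩) ?_, ?_, ?_⟩
  · intro a b hab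
    have key : R (⟨reverseRel b.1, rev_mem_acyc Y b.2⟩ : Acyc Y)
        ⟨reverseRel a.1, rev_mem_acyc Y a.2⟩ := clickstep_rev Y b.2 hab
    exact (Quot.sound key).symm
  · intro x
    induction x using Quot.ind with
    | _ a => exact congrArg (Quot.mk R) (Subtype.ext rfl)
  · intro o o' h
    exact congrArg (Quot.mk R) (Subtype.ext h.symm)

end AcycPaper
end

section
/- If Y is a connected graph on n vertices, then κ(Y) ≤ α(Y)/n, i.e., n·κ(Y) ≤ α(Y), where α(Y) is the number of acyclic orientations and κ(Y) is the number of click-equivalence classes. -/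
/-!
Every click class contains at least `n` orientations. List the vertices of an acyclic orientation
`r` in a topological order `v₁, …, vₙ`. Once `v₁, …, vₖ₋₁` have been clicked, `vₖ` is a source,
and clicking `v₁, …, vₖ` reverses exactly the edges of `r` crossing the cut `{v₁, …, vₖ}`. For
`k < n` these down-closed sets are proper and pairwise distinct, and on a connected graph distinct
such cuts yield distinct orientations. Summing over the classes gives `n · κ(Y) ≤ α(Y)`.
-/

namespace AcycPaper

variable {V : Type*}

lemma mul_card_le_card_of_le_card_fiber {α β : Type*} [Finite α] [Finite β] (f : α → β)
    (n : ℕ) (h : ∀ b, n ≤ Nat.card {a // f a = b}) : n * Nat.card β ≤ Nat.card α := by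
  classical
  have := Fintype.ofFinite α
  have := Fintype.ofFinite β
  simp only [Nat.card_eq_fintype_card, Fintype.card_subtype] at h ⊢
  exact Finset.mul_card_image_le_card_of_maps_to (fun a _ ↦ Finset.mem_univ (f a)) n
    (fun b _ ↦ h b)

lemma wellFounded_of_isAcyclicRel [Finite V] {r : V → V → Prop} (hr : IsAcyclicRel r) :
    WellFounded r := by
  have : IsTrans V (Relation.TransGen r) := ⟨fun _ _ _ ↦ Relation.TransGen.trans⟩
  have : Std.Irrefl (Relation.TransGen r) := ⟨hr⟩
  exact Subrelation.wf Relation.TransGen.single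
    (Finite.wellFounded_of_trans_of_irrefl (Relation.TransGen r))

section ReverseCut

variable {r : V → V → Prop} {S : Finset V} {i j : V}

open Classical in
noncomputable def reverseCut (S : Finset V) (r : V → V → Prop) : V → V → Prop :=
  fun i j ↦ if (i ∈ S ↔ j ∈ S) then r i j else r j i

lemma reverseCut_of_iff (h : i ∈ S ↔ j ∈ S) : reverseCut S r i j = r i j := by
  simp [reverseCut, h]

lemma reverseCut_of_not_iff (h : ¬(i ∈ S ↔ j ∈ S)) : reverseCut S r i j = r j i := by
  simp [reverseCut, h]

lemma reverseCut_empty (r : V → V → Prop) : reverseCut ∅ r = r := by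
  funext i j
  simp [reverseCut]

lemma click_reverseCut [DecidableEq V] {v : V} (hv : v ∉ S) :
    click (reverseCut S r) v = reverseCut (insert v S) r := by
  funext i j
  by_cases hi : v = i <;> by_cases hj : v = j <;> by_cases hiS : i ∈ S <;> by_cases hjS : j ∈ S <;>
    simp_all [click, reverseCut, eq_comm]

lemma click_eq_reverseCut_singleton [DecidableEq V] (r : V → V → Prop) (v : V) :
    click r v = reverseCut {v} r := by
  simpa [reverseCut_empty] using click_reverseCut (r := r) (Finset.notMem_empty v)

lemma isOrientation_reverseCut {Y : SimpleGraph V} (h : IsOrientation Y r) (S : Finset V) :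
    IsOrientation Y (reverseCut S r) := by
  refine ⟨fun i j ↦ ?_, fun i j ↦ ?_⟩ <;> by_cases hc : i ∈ S ↔ j ∈ S
  · rw [reverseCut_of_iff hc, reverseCut_of_iff hc.symm, h.1]
  · rw [reverseCut_of_not_iff hc, reverseCut_of_not_iff (mt Iff.symm hc), h.1, or_comm]
  · rw [reverseCut_of_iff hc, reverseCut_of_iff hc.symm]
    exact h.2 i j
  · rw [reverseCut_of_not_iff hc, reverseCut_of_not_iff (mt Iff.symm hc)]
    exact h.2 j i

end ReverseCut

lemma isAcyclicRel_click {r : V → V → Prop} {v : V}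
    (hr : IsAcyclicRel r) (hv : IsSource r v) : IsAcyclicRel (click r v) := by
  classical
  have hsink : ∀ j, ¬ click r v v j := fun j hj ↦ hv j (by simpa [click] using hj)
  -- A path of `click r v` starting away from `v` is an `r`-path until it reaches the sink `v`.
  have hpath : ∀ a b, Relation.TransGen (click r v) a b → a ≠ v →
      Relation.TransGen r a b ∨ b = v := by
    intro a b h ha
    induction h with
    | @single b hab =>
      by_cases hb : b = v
      · exact .inr hb
      · exact .inl (.single (by simpa [click, Ne.symm ha, Ne.symm hb] using hab))
    | @tail b c _ hbc ih =>
      obtain hab | rfl := ih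
      · by_cases hc : c = v
        · exact .inr hc
        · have hb : b ≠ v := by rintro rfl; exact hsink c hbc
          exact .inl (hab.tail (by simpa [click, Ne.symm hb, Ne.symm hc] using hbc))
      · exact absurd hbc (hsink c)
  intro w hw
  by_cases hwv : w = v
  · subst hwv
    obtain ⟨c, hc, -⟩ := Relation.TransGen.head'_iff.mp hw
    exact hsink c hc
  · exact (hpath w w hw hwv).elim (hr w) hwv

lemma ClickStep.mem_acyc {Y : SimpleGraph V} {r r' : V → V → Prop} (h : ClickStep Y r r') :
    r' ∈ Acyc Y := by
  classical
  obtain ⟨⟨hor, hacyc⟩, v, hv, rfl⟩ := h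
  refine ⟨?_, isAcyclicRel_click hacyc hv⟩
  rw [click_eq_reverseCut_singleton]
  exact isOrientation_reverseCut hor {v}

lemma mem_acyc_of_reflTransGen {Y : SimpleGraph V} {r r' : V → V → Prop} (hr : r ∈ Acyc Y)
    (h : Relation.ReflTransGen (ClickStep Y) r r') : r' ∈ Acyc Y := by
  obtain rfl | ⟨_, _, hstep⟩ := Relation.ReflTransGen.cases_tail h
  exacts [hr, hstep.mem_acyc]

instance {Y : SimpleGraph V} [Finite V] : Finite (KQuot Y) := Quot.finite _

def KQuot.mk {Y : SimpleGraph V} (a : Acyc Y) : KQuot Y := Quot.mk _ a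

lemma KQuot.mk_eq_of_reflTransGen {Y : SimpleGraph V} {a b : Acyc Y}
    (h : Relation.ReflTransGen (ClickStep Y) a.1 b.1) : KQuot.mk a = KQuot.mk b := by
  obtain ⟨b, hb⟩ := b
  dsimp only at h
  induction h with
  | refl => rfl
  | tail _ hstep ih => exact (ih hstep.1).trans (Quot.sound hstep)

lemma _root_.SimpleGraph.Connected.exists_adj_mem_notMem {Y : SimpleGraph V} (hY : Y.Connected)
    {s : Set V} {a b : V} (ha : a ∈ s) (hb : b ∉ s) : ∃ x y, Y.Adj x y ∧ x ∈ s ∧ y ∉ s :=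
  let ⟨p⟩ := hY a b
  let ⟨d, _, hd⟩ := p.exists_boundary_dart s ha hb
  ⟨_, _, d.adj, hd⟩

def IsDownClosed (r : V → V → Prop) (S : Finset V) : Prop :=
  ∀ ⦃x y⦄, r x y → y ∈ S → x ∈ S

section DownClosed

variable {Y : SimpleGraph V} {r : V → V → Prop} {S T : Finset V} {v : V}

lemma IsDownClosed.insert [DecidableEq V] (hS : IsDownClosed r S) (hv : ∀ x, r x v → x ∈ S) :
    IsDownClosed r (insert v S) := by
  intro x y hxy hy
  obtain rfl | hy := Finset.mem_insert.mp hy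
  exacts [Finset.mem_insert_of_mem (hv x hxy), Finset.mem_insert_of_mem (hS hxy hy)]

lemma exists_notMem_forall_rel_mem [Fintype V] (hr : IsAcyclicRel r) (hS : S ≠ Finset.univ) :
    ∃ v ∉ S, ∀ x, r x v → x ∈ S := by
  obtain ⟨v, hvS, hmin⟩ := (wellFounded_of_isAcyclicRel hr).has_min {x | x ∉ S}
    (let ⟨x, _, hx⟩ := Finset.exists_of_ssubset (Finset.ssubset_univ_iff.mpr hS); ⟨x, hx⟩)
  exact ⟨v, hvS, fun x hxv ↦ by_contra fun hx ↦ hmin x hx hxv⟩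

lemma IsDownClosed.isSource_reverseCut (hS : IsDownClosed r S) (hvS : v ∉ S)
    (hv : ∀ x, r x v → x ∈ S) : IsSource (reverseCut S r) v := by
  intro x hxv
  by_cases hx : x ∈ S
  · rw [reverseCut_of_not_iff (by tauto)] at hxv
    exact hvS (hS hxv hx)
  · rw [reverseCut_of_iff (by tauto)] at hxv
    exact hx (hv x hxv)

lemma exists_downClosed_reflTransGen_reverseCut [Fintype V] (hr : r ∈ Acyc Y) {k : ℕ}
    (hk : k ≤ Fintype.card V) : ∃ S : Finset V, S.card = k ∧ IsDownClosed r S ∧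
      Relation.ReflTransGen (ClickStep Y) r (reverseCut S r) := by
  classical
  induction k with
  | zero => exact ⟨∅, rfl, fun _ _ _ h ↦ absurd h (Finset.notMem_empty _), by rw [reverseCut_empty]⟩
  | succ k ih =>
    obtain ⟨S, hcard, hS, hreach⟩ := ih (by omega)
    obtain ⟨v, hvS, hv⟩ := exists_notMem_forall_rel_mem hr.2
      (S := S) fun h ↦ by simp [h] at hcard; omega
    refine ⟨insert v S, by rw [Finset.card_insert_of_notMem hvS, hcard], hS.insert hv,
      hreach.tail ⟨mem_acyc_of_reflTransGen hr hreach, v, hS.isSource_reverseCut hvS hv, ?_⟩⟩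
    exact (click_reverseCut hvS).symm

lemma IsOrientation.iff_iff_of_reverseCut_eq (hr : IsOrientation Y r)
    (h : reverseCut S r = reverseCut T r) {i j : V} (hij : Y.Adj i j) :
    (i ∈ S ↔ j ∈ S) ↔ (i ∈ T ↔ j ∈ T) := by
  have hflip : ¬ (r i j ↔ r j i) := fun hiff ↦ ((hr.1 i j).mp hij).elim
    (fun h' ↦ hr.2 _ _ h' (hiff.mp h')) (fun h' ↦ hr.2 _ _ h' (hiff.mpr h'))
  have hijST := congrFun (congrFun h i) j
  by_cases hS : i ∈ S ↔ j ∈ S <;> by_cases hT : i ∈ T ↔ j ∈ T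
  · tauto
  · rw [reverseCut_of_iff hS, reverseCut_of_not_iff hT] at hijST
    exact absurd (Iff.of_eq hijST) hflip
  · rw [reverseCut_of_not_iff hS, reverseCut_of_iff hT] at hijST
    exact absurd (Iff.of_eq hijST).symm hflip
  · tauto

/-- A reversal determines its cut up to complement, and over a connected graph a down-closed set
whose complement is also down-closed is `∅` or `univ`. -/
lemma IsDownClosed.eq_of_reverseCut_eq [Fintype V] (hY : Y.Connected) (hr : IsOrientation Y r)
    (hS : IsDownClosed r S) (hT : IsDownClosed r T) (hSu : S ≠ Finset.univ)
    (hTu : T ≠ Finset.univ) (h : reverseCut S r = reverseCut T r) : S = T := by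
  obtain ⟨a, -, haS⟩ := Finset.exists_of_ssubset (Finset.ssubset_univ_iff.mpr hSu)
  obtain ⟨b, -, hbT⟩ := Finset.exists_of_ssubset (Finset.ssubset_univ_iff.mpr hTu)
  have hconst : ∀ x y, (x ∈ S ↔ x ∈ T) → (y ∈ S ↔ y ∈ T) := by
    intro x y hx
    by_contra hy
    obtain ⟨i, j, hij, hi, hj⟩ :=
      hY.exists_adj_mem_notMem (s := {x | x ∈ S ↔ x ∈ T}) hx hy
    have := hr.iff_iff_of_reverseCut_eq h hij
    have hi : i ∈ S ↔ i ∈ T := hi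
    exact hj (show j ∈ S ↔ j ∈ T by tauto)
  by_cases hb : b ∈ S ↔ b ∈ T
  · exact Finset.ext fun x ↦ hconst b x hb
  have hbS : b ∈ S := by tauto
  obtain ⟨i, j, hij, hiS, hjS⟩ := hY.exists_adj_mem_notMem (s := ↑S) hbS haS
  have hiT : i ∉ T := fun hiT ↦ hb (hconst i b (by simp_all))
  have hjT : j ∈ T := by_contra fun hjT ↦ hb (hconst j b (by simp_all))
  rcases (hr.1 i j).mp hij with hij | hji
  · exact absurd (hT hij hjT) hiT
  · exact absurd (hS hji hiS) hjS

end DownClosed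

lemma card_le_card_kQuot_fiber [Fintype V] {Y : SimpleGraph V} (hY : Y.Connected) (a : Acyc Y) :
    Fintype.card V ≤ Nat.card {b : Acyc Y // KQuot.mk b = KQuot.mk a} := by
  have hchain (k : Fin (Fintype.card V)) := exists_downClosed_reflTransGen_reverseCut a.2 k.2.le
  choose S hcard hdown hreach using hchain
  have hSu (k : Fin (Fintype.card V)) : S k ≠ Finset.univ := fun h ↦ by
    simpa [h, Finset.card_univ] using (hcard k).trans_lt k.2
  let f (k : Fin (Fintype.card V)) : {b : Acyc Y // KQuot.mk b = KQuot.mk a} :=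
    ⟨⟨_, mem_acyc_of_reflTransGen a.2 (hreach k)⟩, (KQuot.mk_eq_of_reflTransGen (hreach k)).symm⟩
  have hf : Function.Injective f := fun k l hkl ↦ Fin.ext <| by
    rw [← hcard k, ← hcard l, (hdown k).eq_of_reverseCut_eq hY a.2.1 (hdown l) (hSu k) (hSu l)
      (congrArg (·.1.1) hkl)]
  simpa using Nat.card_le_card_of_injective f hf

/-- for a connected graph Y on n vertices, n·κ(Y) ≤ α(Y). -/
theorem kappa_le_alpha_div_card {V : Type*} [Fintype V] (Y : SimpleGraph V)
    (hY : Y.Connected) :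
    Fintype.card V * kappa Y ≤ alpha Y :=
  mul_card_le_card_of_le_card_fiber KQuot.mk _ (Quot.ind (card_le_card_kQuot_fiber hY))

end AcycPaper
end

section
/- For any cycle C in a graph Y, the function ν_C : Acyc(Y) → ℤ, counting edges of C oriented in the direction of traversal minus edges oriented against it, is invariant under source-to-sink operations; hence ν_C is constant on κ-equivalence classes. -/
namespace AcycPaper

variable {V : Type*}

/-- ν_C(r): the number of edges of the cycle C (given by c : ZMod k → V)
oriented in the direction of traversal, minus the number oriented against it. -/
noncomputable def nuC {V : Type*} {k : ℕ} (c : ZMod k → V) (r : V → V → Prop) : ℤ :=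
  (Nat.card {i : ZMod k // r (c i) (c (i + 1))} : ℤ) -
    (Nat.card {i : ZMod k // r (c (i + 1)) (c i)} : ℤ)

/-- for any cycle C in Y, the function ν_C : Acyc(Y) → ℤ is
invariant under source-to-sink operations, and hence constant on
κ-equivalence classes. -/
theorem nuC_click_invariant {V : Type*} [Fintype V] {k : ℕ} (hk : 3 ≤ k)
    (Y : SimpleGraph V) (c : ZMod k → V) (hinj : Function.Injective c)
    (hadj : ∀ i : ZMod k, Y.Adj (c i) (c (i + 1))) :
    (∀ r ∈ Acyc Y, ∀ v, IsSource r v → nuC c (click r v) = nuC c r) ∧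
    (∀ r r' : V → V → Prop, KEquiv Y r r' → nuC c r' = nuC c r) := by
  haveI : NeZero k := ⟨by omega⟩
  have h1 : (1 : ZMod k) ≠ 0 := by
    haveI : Fact (1 < k) := ⟨by omega⟩
    exact one_ne_zero
  have key : ∀ r ∈ Acyc Y, ∀ v, IsSource r v → nuC c (click r v) = nuC c r := by
    intro r hr v hv
    by_cases hvc : ∃ i, c i = v
    · obtain ⟨i₀, hi₀⟩ := hvc
      set i₁ : ZMod k := i₀ - 1 with hi₁def
      have h10 : i₀ ≠ i₁ := by
        intro h
        exact h1 (sub_eq_self.mp h.symm)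
      have h11 : i₁ + 1 = i₀ := by rw [hi₁def]; ring
      have hsrc : ∀ j, ¬ r j (c i₀) := by
        intro j; rw [hi₀]; exact hv j
      have hf0 : r (c i₀) (c (i₀ + 1)) :=
        ((hr.1.1 _ _).mp (hadj i₀)).resolve_right (hsrc _)
      have hf1 : r (c i₀) (c i₁) := by
        have := (hr.1.1 _ _).mp (hadj i₁)
        rw [h11] at this
        exact this.resolve_left (hsrc _)
      have hFne : ∀ i : ZMod k, i ≠ i₀ → i ≠ i₁ → ¬ (v = c i ∨ v = c (i + 1)) := by
        intro i hA hB h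
        rcases h with h | h
        · exact hA (hinj (hi₀.trans h)).symm
        · apply hB
          have : i₀ = i + 1 := hinj (hi₀.trans h)
          rw [hi₁def, this]; ring
      have hF : ∀ i : ZMod k,
          click r v (c i) (c (i + 1)) ↔ r (c (Equiv.swap i₀ i₁ i)) (c (Equiv.swap i₀ i₁ i + 1)) := by
        intro i
        by_cases hA : i = i₀
        · subst hA
          rw [Equiv.swap_apply_left, h11]
          simp only [click, if_pos (Or.inl hi₀.symm)]
          exact iff_of_false (hsrc _) (hsrc _)
        · by_cases hB : i = i₁
          · subst hB
            rw [Equiv.swap_apply_right, h11]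
            simp only [click, if_pos (Or.inr hi₀.symm)]
            exact iff_of_true hf1 hf0
          · rw [Equiv.swap_apply_of_ne_of_ne hA hB]
            simp only [click, if_neg (hFne i hA hB)]
      have hB : ∀ i : ZMod k,
          click r v (c (i + 1)) (c i) ↔ r (c (Equiv.swap i₀ i₁ i + 1)) (c (Equiv.swap i₀ i₁ i)) := by
        intro i
        by_cases hA : i = i₀
        · subst hA
          rw [Equiv.swap_apply_left, h11]
          simp only [click, if_pos (Or.inr hi₀.symm)]
          exact iff_of_true hf0 hf1
        · by_cases hB : i = i₁
          · subst hB
            rw [Equiv.swap_apply_right, h11]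
            simp only [click, if_pos (Or.inl hi₀.symm)]
            exact iff_of_false (hsrc _) (hsrc _)
          · rw [Equiv.swap_apply_of_ne_of_ne hA hB]
            have : ¬ (v = c (i + 1) ∨ v = c i) := by
              intro h; exact hFne i hA hB h.symm
            simp only [click, if_neg this]
      have e1 : Nat.card {i : ZMod k // click r v (c i) (c (i + 1))} =
          Nat.card {i : ZMod k // r (c i) (c (i + 1))} :=
        Nat.card_congr (Equiv.subtypeEquiv (Equiv.swap i₀ i₁) hF)
      have e2 : Nat.card {i : ZMod k // click r v (c (i + 1)) (c i)} =
          Nat.card {i : ZMod k // r (c (i + 1)) (c i)} :=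
        Nat.card_congr (Equiv.subtypeEquiv (Equiv.swap i₀ i₁) hB)
      simp only [nuC, e1, e2]
    · push_neg at hvc
      have hF : ∀ i : ZMod k, click r v (c i) (c (i + 1)) ↔ r (c i) (c (i + 1)) := by
        intro i
        have : ¬ (v = c i ∨ v = c (i + 1)) := by
          intro h; rcases h with h | h
          · exact hvc i h.symm
          · exact hvc (i + 1) h.symm
        simp only [click, if_neg this]
      have hB : ∀ i : ZMod k, click r v (c (i + 1)) (c i) ↔ r (c (i + 1)) (c i) := by
        intro i
        have : ¬ (v = c (i + 1) ∨ v = c i) := by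
          intro h; rcases h with h | h
          · exact hvc (i + 1) h.symm
          · exact hvc i h.symm
        simp only [click, if_neg this]
      have e1 : Nat.card {i : ZMod k // click r v (c i) (c (i + 1))} =
          Nat.card {i : ZMod k // r (c i) (c (i + 1))} :=
        Nat.card_congr (Equiv.subtypeEquivRight hF)
      have e2 : Nat.card {i : ZMod k // click r v (c (i + 1)) (c i)} =
          Nat.card {i : ZMod k // r (c (i + 1)) (c i)} :=
        Nat.card_congr (Equiv.subtypeEquivRight hB)
      simp only [nuC, e1, e2]
  refine ⟨key, ?_⟩
  intro r r' h
  induction h with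
  | rel a b hab =>
    obtain ⟨ha, v, hv, rfl⟩ := hab
    exact key a ha v hv
  | refl => rfl
  | symm _ _ _ ih => exact ih.symm
  | trans _ _ _ _ _ ih1 ih2 => exact ih2.trans ih1

end AcycPaper
end

section
/- Let O be an acyclic orientation of Y, let c = c_1 c_2 ⋯ c_m be a click-sequence applicable to O (each c_i is a source of the intermediate orientation), and let (v_1, v_2) be a directed edge of O. Then the occurrences of v_1 and v_2 in the sequence c alternate, with v_1 appearing first. -/
namespace AcycPaper

variable {V : Type*}

/-- `IsClickSeq r l`: the list of vertices `l` is a legal click-sequence from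
`r`: each vertex is a source of the intermediate orientation when clicked. -/
def IsClickSeq (r : V → V → Prop) : List V → Prop
  | [] => True
  | v :: l => IsSource r v ∧ IsClickSeq (click r v) l

/-!
Follow the edge between `v₁` and `v₂` through the sequence. Clicking a vertex outside the edge
leaves it untouched; the tail of the edge can never be clicked, being no source; clicking the
head of the edge reverses it. So the clicked endpoint is always the current head, and the
two endpoints take turns, starting with `v₁`.
-/

theorem click_apply_of_ne {r : V → V → Prop} {v i j : V} (hi : v ≠ i) (hj : v ≠ j) :
    click r v i j ↔ r i j := by
  simp [click, hi, hj]

theorem click_apply_self_right {r : V → V → Prop} {v j : V} : click r v j v ↔ r v j := by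
  simp [click]

theorem IsSource.ne_of_rel {r : V → V → Prop} {v a b : V} (hv : IsSource r v) (hab : r a b) :
    v ≠ b := by
  rintro rfl
  exact hv a hab

def IsAlternating (a b : V) (l : List V) : Prop :=
  ∀ i (hi : i < l.length), l[i] = if Even i then a else b

theorem IsAlternating.cons {a b : V} {l : List V} (h : IsAlternating b a l) :
    IsAlternating a b (a :: l) := by
  rintro (_ | i) hi
  · simp
  · simp only [List.getElem_cons_succ, h i (by simpa using hi), Nat.even_add_one]
    split_ifs <;> rfl

theorem isAlternating_filter_of_isClickSeq {p : V → Bool} :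
    ∀ {r : V → V → Prop} {c : List V}, IsClickSeq r c → ∀ {a b : V}, r a b →
      (∀ x, p x ↔ x = a ∨ x = b) → IsAlternating a b (c.filter p)
  | _, [], _, _, _, _, _ => fun i hi => by simp at hi
  | r, v :: l, ⟨hsrc, hrest⟩, a, b, hab, hp => by
    have hvb : v ≠ b := hsrc.ne_of_rel hab
    by_cases hva : v = a
    · subst hva
      rw [List.filter_cons_of_pos ((hp v).2 (Or.inl rfl))]
      exact (isAlternating_filter_of_isClickSeq hrest (click_apply_self_right.2 hab)
        fun x => (hp x).trans or_comm).cons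
    · rw [List.filter_cons_of_neg fun h => (((hp v).1 h).elim hva hvb)]
      exact isAlternating_filter_of_isClickSeq hrest ((click_apply_of_ne hva hvb).2 hab) hp

theorem click_sequence_alternates_general {V : Type*} [DecidableEq V]
    (r : V → V → Prop)
    (c : List V) (hc : IsClickSeq r c) (v₁ v₂ : V) (h12 : r v₁ v₂) :
    ∀ (i : ℕ) (hi : i < (c.filter (fun x => decide (x = v₁ ∨ x = v₂))).length),
      (c.filter (fun x => decide (x = v₁ ∨ x = v₂)))[i] =
        if Even i then v₁ else v₂ :=
  isAlternating_filter_of_isClickSeq hc h12 fun _ => decide_eq_true_iff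

/-- if (v₁,v₂) is a directed edge of an acyclic orientation r and
c is a click-sequence applicable to r, then the occurrences of v₁ and v₂ in c
alternate, with v₁ appearing first: the sublist of c consisting of the
occurrences of v₁ and v₂ is v₁ at even indices and v₂ at odd indices. -/
theorem click_sequence_alternates {V : Type*} [Fintype V] [DecidableEq V]
    (Y : SimpleGraph V) (r : V → V → Prop) (hr : r ∈ Acyc Y)
    (c : List V) (hc : IsClickSeq r c) (v₁ v₂ : V) (h12 : r v₁ v₂) :
    ∀ (i : ℕ) (hi : i < (c.filter (fun x => decide (x = v₁ ∨ x = v₂))).length),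
      (c.filter (fun x => decide (x = v₁ ∨ x = v₂)))[i] =
        if Even i then v₁ else v₂ :=
  click_sequence_alternates_general r c hc v₁ v₂ h12

end AcycPaper
end

section
/- Let e = {v,w} be an edge of Y and O¹, O² two acyclic orientations of Y each orienting e as (v,w). If O¹ and O² are κ-equivalent, then the vw-intervals of O¹ and O² coincide: the set of vertices lying on a directed path from v to w is the same in both orientations, and moreover each such directed path in O¹ is a directed path in O². -/
namespace AcycPaper

variable {V : Type*}

section Aux

variable {Y : SimpleGraph V}

private lemma click_orient {r : V → V → Prop} (h : IsOrientation Y r) (u : V) :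
    IsOrientation Y (click r u) := by
  obtain ⟨h1, h2⟩ := h
  constructor
  · intro i j
    rw [h1 i j]
    unfold click
    by_cases hc : u = i ∨ u = j
    · have hc' : u = j ∨ u = i := hc.symm
      rw [if_pos hc, if_pos hc']
      tauto
    · have hc' : ¬ (u = j ∨ u = i) := fun h => hc h.symm
      rw [if_neg hc, if_neg hc']
  · intro i j hij hji
    unfold click at hij hji
    by_cases hc : u = i ∨ u = j
    · have hc' : u = j ∨ u = i := hc.symm
      rw [if_pos hc] at hij; rw [if_pos hc'] at hji
      exact h2 j i hij hji
    · have hc' : ¬ (u = j ∨ u = i) := fun h => hc h.symm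
      rw [if_neg hc] at hij; rw [if_neg hc'] at hji
      exact h2 i j hij hji

private def FF (r : V → V → Prop) (n : V → ℤ) (a b : V) : Prop :=
  (r a b ∧ n a = n b) ∨ (r b a ∧ n b = n a + 1)

private lemma key {r s : V → V → Prop} (h : KEquiv Y r s) :
    (IsOrientation Y r ↔ IsOrientation Y s) ∧
    (IsOrientation Y r → ∃ n : V → ℤ, ∀ a b, Y.Adj a b → (s a b ↔ FF r n a b)) := by
  classical
  induction h with
  | rel x y hxy =>
    obtain ⟨⟨hox, _⟩, u, hu, rfl⟩ := hxy
    refine ⟨⟨fun _ => click_orient hox u, fun _ => hox⟩, fun _ => ?_⟩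
    refine ⟨fun z => if z = u then 1 else 0, fun a b hab => ?_⟩
    have hval : ∀ z : V, (fun z => if z = u then (1:ℤ) else 0) z = if z = u then 1 else 0 :=
      fun z => rfl
    have hne : a ≠ b := hab.ne
    by_cases ha : a = u
    · subst ha
      have hclick : click x a a b = x b a := by
        unfold click; rw [if_pos (Or.inl rfl)]
      have hb : ¬ b = a := fun h => hne h.symm
      simp only [FF, hclick, hval, if_pos rfl, if_neg hb]
      constructor
      · intro hba; exact absurd hba (hu b)
      · rintro (⟨_, h1⟩ | ⟨hba, _⟩)
        · exact absurd h1 (by norm_num)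
        · exact absurd hba (hu b)
    · by_cases hb : b = u
      · subst hb
        have hclick : click x b a b = x b a := by
          unfold click; rw [if_pos (Or.inr rfl)]
        simp only [FF, hclick, hval, if_pos rfl, if_neg ha]
        constructor
        · intro hba; exact Or.inr ⟨hba, by norm_num⟩
        · rintro (⟨hab', _⟩ | ⟨hba, _⟩)
          · exact absurd hab' (hu a)
          · exact hba
      · have hclick : click x u a b = x a b := by
          unfold click
          rw [if_neg]
          rintro (h | h)
          · exact ha h.symm
          · exact hb h.symm
        simp only [FF, hclick, hval, if_neg ha, if_neg hb]
        constructor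
        · intro hab'; exact Or.inl ⟨hab', by trivial⟩
        · rintro (⟨hab', _⟩ | ⟨_, h1⟩)
          · exact hab'
          · exact absurd h1 (by norm_num)
  | refl x =>
    refine ⟨Iff.rfl, fun _ => ⟨0, fun a b _ => ?_⟩⟩
    constructor
    · intro h; exact Or.inl ⟨h, rfl⟩
    · rintro (⟨h, _⟩ | ⟨_, h1⟩)
      · exact h
      · exact absurd h1 (by norm_num)
  | symm x y hxy ih =>
    obtain ⟨hiff, hinv⟩ := ih
    refine ⟨hiff.symm, fun hoy => ?_⟩
    have hox : IsOrientation Y x := hiff.mpr hoy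
    obtain ⟨n, hn⟩ := hinv hox
    refine ⟨fun z => - n z, fun a b hab => ?_⟩
    have h1 := hn a b hab
    have h2 := hn b a hab.symm
    have hadjx := (hox.1 a b).mp hab
    have hadjy := (hoy.1 a b).mp hab
    simp only [FF] at h1 h2 ⊢
    by_cases hxab : x a b
    · have hxba : ¬ x b a := hox.2 a b hxab
      constructor
      · intro _
        rcases hadjy with hyab | hyba
        · have := h1.mp hyab
          rcases this with ⟨_, he⟩ | ⟨hc, _⟩
          · exact Or.inl ⟨hyab, by omega⟩
          · exact absurd hc hxba
        · have := h2.mp hyba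
          rcases this with ⟨hc, _⟩ | ⟨_, he⟩
          · exact absurd hc hxba
          · exact Or.inr ⟨hyba, by omega⟩
      · intro _; exact hxab
    · have hxba : x b a := hadjx.resolve_left hxab
      constructor
      · intro h; exact absurd h hxab
      · rintro (⟨hyab, he⟩ | ⟨hyba, he⟩)
        · rcases h1.mp hyab with ⟨hc, _⟩ | ⟨_, he2⟩
          · exact absurd hc hxab
          · omega
        · rcases h2.mp hyba with ⟨_, he2⟩ | ⟨hc, _⟩
          · omega
          · exact absurd hc hxab
  | trans x y z hxy hyz ih1 ih2 =>
    obtain ⟨hiff1, hinv1⟩ := ih1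
    obtain ⟨hiff2, hinv2⟩ := ih2
    refine ⟨hiff1.trans hiff2, fun hox => ?_⟩
    have hoy : IsOrientation Y y := hiff1.mp hox
    obtain ⟨n, hn⟩ := hinv1 hox
    obtain ⟨m, hm⟩ := hinv2 hoy
    refine ⟨fun z => n z + m z, fun a b hab => ?_⟩
    have h1 := hn a b hab
    have h1' := hn b a hab.symm
    have h2 := hm a b hab
    have h2' := hm b a hab.symm
    have hadjx := (hox.1 a b).mp hab
    have hadjy := (hoy.1 a b).mp hab
    simp only [FF] at h1 h1' h2 h2' ⊢
    by_cases hxab : x a b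
    · have hxba : ¬ x b a := hox.2 a b hxab
      rcases hadjy with hyab | hyba
      · have hyba : ¬ y b a := hoy.2 a b hyab
        have hen : n a = n b := by
          rcases h1.mp hyab with ⟨_, he⟩ | ⟨hc, _⟩
          · exact he
          · exact absurd hc hxba
        constructor
        · intro hz
          rcases h2.mp hz with ⟨_, he⟩ | ⟨hc, _⟩
          · exact Or.inl ⟨hxab, by omega⟩
          · exact absurd hc hyba
        · rintro (⟨_, he⟩ | ⟨hc, he⟩)
          · exact h2.mpr (Or.inl ⟨hyab, by omega⟩)
          · exact absurd hc hxba
      · have hyab : ¬ y a b := hoy.2 b a hyba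
        have hen : n a = n b + 1 := by
          rcases h1'.mp hyba with ⟨hc, _⟩ | ⟨_, he⟩
          · exact absurd hc hxba
          · exact he
        constructor
        · intro hz
          rcases h2.mp hz with ⟨hc, _⟩ | ⟨_, he⟩
          · exact absurd hc hyab
          · exact Or.inl ⟨hxab, by omega⟩
        · rintro (⟨_, he⟩ | ⟨hc, _⟩)
          · exact h2.mpr (Or.inr ⟨hyba, by omega⟩)
          · exact absurd hc hxba
    · have hxba : x b a := hadjx.resolve_left hxab
      rcases hadjy with hyab | hyba
      · have hyba : ¬ y b a := hoy.2 a b hyab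
        have hen : n b = n a + 1 := by
          rcases h1.mp hyab with ⟨hc, _⟩ | ⟨_, he⟩
          · exact absurd hc hxab
          · exact he
        constructor
        · intro hz
          rcases h2.mp hz with ⟨_, he⟩ | ⟨hc, _⟩
          · exact Or.inr ⟨hxba, by omega⟩
          · exact absurd hc hyba
        · rintro (⟨hc, _⟩ | ⟨_, he⟩)
          · exact absurd hc hxab
          · exact h2.mpr (Or.inl ⟨hyab, by omega⟩)
      · have hyab : ¬ y a b := hoy.2 b a hyba
        have hen : n b = n a := by
          rcases h1'.mp hyba with ⟨_, he⟩ | ⟨hc, _⟩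
          · exact he
          · exact absurd hc hxab
        constructor
        · intro hz
          rcases h2.mp hz with ⟨hc, _⟩ | ⟨_, he⟩
          · exact absurd hc hyab
          · exact Or.inr ⟨hxba, by omega⟩
        · rintro (⟨hc, _⟩ | ⟨_, he⟩)
          · exact absurd hc hxab
          · exact h2.mpr (Or.inr ⟨hyba, by omega⟩)

private lemma dir_lemma {r s : V → V → Prop} (hor : IsOrientation Y r) (hos : IsOrientation Y s)
    {n : V → ℤ} (hn : ∀ a b, Y.Adj a b → (s a b ↔ FF r n a b))
    {v w : V} (hvw : r v w) (hvw' : s v w) :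
    (∀ a b, Relation.ReflTransGen r v a → r a b → Relation.ReflTransGen r b w → s a b) ∧
    (∀ a, Relation.ReflTransGen r v a → Relation.ReflTransGen r a w →
      Relation.ReflTransGen s v a ∧ Relation.ReflTransGen s a w) := by
  have hstep : ∀ a b, r a b → (s a b ∧ n a = n b) ∨ (s b a ∧ n a = n b + 1) := by
    intro a b hab
    have hadj : Y.Adj a b := (hor.1 a b).mpr (Or.inl hab)
    have hnab := hn a b hadj
    have hnba := hn b a hadj.symm
    have hrba : ¬ r b a := hor.2 a b hab
    rcases (hos.1 a b).mp hadj with hsab | hsba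
    · rcases hnab.mp hsab with ⟨_, he⟩ | ⟨hc, _⟩
      · exact Or.inl ⟨hsab, he⟩
      · exact absurd hc hrba
    · rcases hnba.mp hsba with ⟨hc, _⟩ | ⟨_, he⟩
      · exact absurd hc hrba
      · exact Or.inr ⟨hsba, by omega⟩
  have hmono : ∀ a b, Relation.ReflTransGen r a b → n b ≤ n a := by
    intro a b h
    induction h with
    | refl => omega
    | tail h1 h2 ih =>
      rcases hstep _ _ h2 with ⟨_, he⟩ | ⟨_, he⟩ <;> omega
  have hvweq : n v = n w := by
    rcases hstep v w hvw with ⟨_, he⟩ | ⟨hswv, _⟩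
    · exact he
    · exact absurd hvw' (hos.2 w v hswv)
  have hpath : ∀ a b, Relation.ReflTransGen r a b → n a = n b → Relation.ReflTransGen s a b := by
    intro a b h
    induction h using Relation.ReflTransGen.head_induction_on with
    | refl => intro _; exact Relation.ReflTransGen.refl
    | head h1 h2 ih =>
      intro he
      have hcb := hmono _ _ h2
      rcases hstep _ _ h1 with ⟨hs, he2⟩ | ⟨_, he2⟩
      · exact Relation.ReflTransGen.head hs (ih (by omega))
      · exact absurd he2 (by omega)
  refine ⟨fun a b h1 hab h2 => ?_, fun a h1 h2 => ?_⟩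
  · have hva := hmono _ _ h1
    have hbw := hmono _ _ h2
    rcases hstep _ _ hab with ⟨hs, _⟩ | ⟨_, he⟩
    · exact hs
    · omega
  · have hva := hmono _ _ h1
    have haw := hmono _ _ h2
    exact ⟨hpath _ _ h1 (by omega), hpath _ _ h2 (by omega)⟩

end Aux

/-- let e = {v,w} be an edge of the connected graph Y and let
r₁, r₂ be κ-equivalent acyclic orientations both orienting e as (v,w). Then
the vw-intervals (vertices on a directed path from v to w) coincide, and every
directed path from v to w in r₁ is a directed path in r₂ (each edge on such a
path is oriented the same way in r₂). -/
theorem vw_interval_well_defined {V : Type*} [Fintype V] (Y : SimpleGraph V)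
    (hY : Y.Connected) (v w : V) (he : Y.Adj v w)
    (r₁ r₂ : V → V → Prop) (h₁ : r₁ ∈ Acyc Y) (h₂ : r₂ ∈ Acyc Y)
    (hvw₁ : r₁ v w) (hvw₂ : r₂ v w) (hk : KEquiv Y r₁ r₂) :
    ({a | Relation.ReflTransGen r₁ v a ∧ Relation.ReflTransGen r₁ a w} =
      {a | Relation.ReflTransGen r₂ v a ∧ Relation.ReflTransGen r₂ a w}) ∧
    (∀ a b, Relation.ReflTransGen r₁ v a → r₁ a b →
      Relation.ReflTransGen r₁ b w → r₂ a b) := by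
  have ho1 : IsOrientation Y r₁ := h₁.1
  have ho2 : IsOrientation Y r₂ := h₂.1
  obtain ⟨n, hn⟩ := (key hk).2 ho1
  obtain ⟨m, hm⟩ := (key (Relation.EqvGen.symm _ _ hk)).2 ho2
  have d1 := dir_lemma ho1 ho2 hn hvw₁ hvw₂
  have d2 := dir_lemma ho2 ho1 hm hvw₂ hvw₁
  refine ⟨Set.ext fun a => ⟨fun h => d1.2 a h.1 h.2, fun h => d2.2 a h.1 h.2⟩, d1.1⟩

end AcycPaper
end
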